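/- arXiv:2402.17922 — 8 statements merged into one kernel-verified Lean document; each statement's English description precedes it below -/
import Mathlib

section
/- Under conditions (HM1)–(HM4), the normalized overall mean squared error of the two-stage estimator converges to the inverse Fisher information at the true parameter: lim_{n→∞} n·V̄_n = 1/I(θ_t). -/
open MeasureTheory Filter Topology ENNReal

set_option maxHeartbeats 400000

/-- Under conditions (HM1)–(HM4), the normalized overall mean squared error of the
two-stage estimator converges to the inverse Fisher information at the true parameter:
`lim_{n→∞} n·V̄_n = 1/I(θ_t)`. -/
theorem two_stage_mse_convergence
    (θt : ℝ) (Γ : Set ℝ) (hΓmeas : MeasurableSet Γ) (hΓnbhd : Γ ∈ nhds θt)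
    (f : ℕ → ℕ) (hf_lt : ∀ n, 1 ≤ n → f n < n)
    (hf_top : Tendsto f atTop atTop)
    (hf_ratio : Tendsto (fun n => (f n : ℝ) / n) atTop (𝓝 0))
    (μ : ℕ → Measure ℝ) [∀ n, IsProbabilityMeasure (μ n)]
    (hμΓ : ∀ n, μ n Γᶜ = 0)
    (V : ℕ → ℝ → ℝ) (hV_meas : ∀ n, Measurable (V n))
    (hV_nonneg : ∀ n s, 0 ≤ V n s)
    (I : ℝ → ℝ) (hI_pos : ∀ s ∈ Γ, 0 < I s)
    -- (HM1) for every ε > 0, n·μ_n({s : |s − θ_t| > ε}) → 0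
    (HM1 : ∀ ε > (0 : ℝ),
      Tendsto (fun n : ℕ => (n : ℝ≥0∞) * μ n {s | ε < |s - θt|}) atTop (𝓝 0))
    -- (HM2) the conditional MSE is uniformly bounded by a constant C₁
    (HM2 : ∃ C₁ > (0 : ℝ), ∀ n, ∀ s ∈ Γ, V n s ≤ C₁)
    -- (HM3) uniform convergence of (n − f(n))·V_n(s) to 1/I(s) near θ_t
    (HM3 : ∀ δ > (0 : ℝ), ∀ ε > (0 : ℝ), ∃ n₀ : ℕ, ∀ n > n₀, ∀ s ∈ Γ,
      |s - θt| ≤ δ → |((n : ℝ) - (f n : ℝ)) * V n s - 1 / I s| < ε)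
    -- (HM4) the Fisher information is continuous on Γ
    (HM4 : ContinuousOn I Γ) :
    Tendsto (fun n : ℕ => (n : ℝ) * ∫ s in Γ, V n s ∂(μ n)) atTop (𝓝 (1 / I θt)) := by
  obtain ⟨C₁, hC₁pos, hC₁⟩ := HM2
  have hθΓ : θt ∈ Γ := mem_of_mem_nhds hΓnbhd
  have hL : 0 < I θt := hI_pos θt hθΓ
  have hLpos : 0 < 1 / I θt := by positivity
  -- continuity of 1/I at θt
  have hIcont : ContinuousAt (fun s => 1 / I s) θt :=
    (continuousAt_const).div (HM4.continuousAt hΓnbhd) hL.ne'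
  -- integrability of V n on measurable subsets of Γ
  have hInt : ∀ n : ℕ, ∀ S : Set ℝ, MeasurableSet S → S ⊆ Γ → IntegrableOn (V n) S (μ n) := by
    intro n S hS hSΓ
    refine Integrable.mono' (integrable_const C₁) ((hV_meas n).aestronglyMeasurable) ?_
    filter_upwards [ae_restrict_mem hS] with x hx
    rw [Real.norm_of_nonneg (hV_nonneg n x)]
    exact hC₁ n x (hSΓ hx)
  have habs_meas : Measurable fun s : ℝ => |s - θt| :=
    (measurable_id.sub measurable_const).abs
  have hμΓ1 : ∀ n, μ n Γ = 1 := by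
    intro n
    have h := measure_add_measure_compl (μ := μ n) hΓmeas
    rw [hμΓ n, add_zero] at h
    simpa using h
  -- main ε-argument
  rw [Metric.tendsto_nhds]
  intro ε hε
  -- constants
  have hM : (0:ℝ) < 1 / I θt + 1 := by positivity
  set M : ℝ := 1 / I θt + 1 with hMdef
  -- choose δ from continuity
  have hε' : (0:ℝ) < min (ε/8) 1 := by positivity
  obtain ⟨δ, hδpos, hδ⟩ := Metric.continuousAt_iff.1 hIcont (min (ε/8) 1) hε'
  set δ' : ℝ := δ / 2 with hδ'def
  have hδ'pos : 0 < δ' := by positivity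
  have hδ'lt : ∀ s : ℝ, |s - θt| ≤ δ' → |1 / I s - 1 / I θt| < min (ε/8) 1 := by
    intro s hs
    have : dist s θt < δ := by
      rw [Real.dist_eq]; linarith
    simpa [Real.dist_eq] using hδ this
  -- tail sets
  set T : Set ℝ := {s : ℝ | δ' < |s - θt|} with hTdef
  have hTmeas : MeasurableSet T := measurableSet_lt measurable_const habs_meas
  have hNmeas : MeasurableSet {s : ℝ | |s - θt| ≤ δ'} :=
    measurableSet_le habs_meas measurable_const
  -- real-valued tail convergence
  have hTtend : Tendsto (fun n : ℕ => (n : ℝ) * (μ n T).toReal) atTop (𝓝 0) := by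
    have h0 := (ENNReal.tendsto_toReal (a := 0) (by simp)).comp (HM1 δ' hδ'pos)
    have heq : (ENNReal.toReal ∘ fun n : ℕ => (n : ℝ≥0∞) * μ n {s | δ' < |s - θt|})
        = fun n : ℕ => (n : ℝ) * (μ n T).toReal := by
      funext n
      simp [Function.comp, ENNReal.toReal_mul, hTdef]
    rw [heq] at h0
    simpa using h0
  -- threshold for tail smallness
  have hηpos : (0:ℝ) < min (ε / (8 * C₁)) (ε / 8 * I θt) := by positivity
  set η : ℝ := min (ε / (8 * C₁)) (ε / 8 * I θt) with hηdef
  -- eventual facts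
  obtain ⟨n₀, hn₀⟩ := HM3 δ' hδ'pos (ε/16) (by positivity)
  have hρpos : (0:ℝ) < min (1/2) (ε / (32 * M)) := by positivity
  set ρ : ℝ := min (1/2) (ε / (32 * M)) with hρdef
  have E1 : ∀ᶠ n : ℕ in atTop, ∀ s ∈ Γ, |s - θt| ≤ δ' →
      |((n : ℝ) - (f n : ℝ)) * V n s - 1 / I s| < ε/16 :=
    eventually_atTop.2 ⟨n₀ + 1, fun n hn => hn₀ n (by omega)⟩
  have E2 : ∀ᶠ n : ℕ in atTop, (f n : ℝ) / n < ρ :=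
    hf_ratio.eventually (Iio_mem_nhds hρpos)
  have E3 : ∀ᶠ n : ℕ in atTop, (n : ℝ) * (μ n T).toReal < η :=
    hTtend.eventually (Iio_mem_nhds hηpos)
  have E4 : ∀ᶠ n : ℕ in atTop, 1 ≤ n := eventually_ge_atTop 1
  filter_upwards [E1, E2, E3, E4] with n h1 h2 h3 h4
  -- set up for fixed n
  have hx1 : (1:ℝ) ≤ (n:ℝ) := by exact_mod_cast h4
  have hxpos : (0:ℝ) < (n:ℝ) := lt_of_lt_of_le one_pos hx1
  have hg0 : (0:ℝ) ≤ (f n : ℝ) := Nat.cast_nonneg _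
  have hghalf : (f n : ℝ) < (n:ℝ) / 2 := by
    have hρle : ρ ≤ 1/2 := min_le_left _ _
    rw [div_lt_iff₀ hxpos] at h2
    have h2' : ρ * (n:ℝ) ≤ (1/2) * (n:ℝ) := mul_le_mul_of_nonneg_right hρle hxpos.le
    linarith
  have hxg : (0:ℝ) < (n:ℝ) - (f n : ℝ) := by linarith
  have hxg2 : (n:ℝ) / 2 ≤ (n:ℝ) - (f n : ℝ) := by linarith
  -- pointwise bound on the central region
  have key : ∀ s ∈ Γ, |s - θt| ≤ δ' → |(n:ℝ) * V n s - 1 / I θt| ≤ ε/2 := by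
    intro s hs hsd
    have hD := h1 s hs hsd
    have hΔ := hδ'lt s hsd
    have hIs : |1 / I s| ≤ M := by
      have h1L : |(1:ℝ) / I θt| = 1 / I θt := abs_of_pos hLpos
      calc |1 / I s| ≤ |1 / I s - 1 / I θt| + |1 / I θt| := by
            have := abs_sub_abs_le_abs_sub (1 / I s) (1 / I θt); linarith [abs_sub_comm (1 / I s) (1 / I θt)]
        _ ≤ 1 + 1 / I θt := by
            have : |1 / I s - 1 / I θt| ≤ 1 := le_of_lt (lt_of_lt_of_le hΔ (min_le_right _ _))
            rw [h1L]; linarith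
        _ = M := by rw [hMdef]; ring
    set c : ℝ := (n:ℝ) / ((n:ℝ) - (f n : ℝ)) with hcdef
    set d : ℝ := (f n : ℝ) / ((n:ℝ) - (f n : ℝ)) with hddef
    have hc0 : 0 ≤ c := by positivity
    have hc2 : c ≤ 2 := by
      rw [hcdef, div_le_iff₀ hxg]; linarith
    have hd0 : 0 ≤ d := by positivity
    have hd2 : d ≤ ε / (16 * M) := by
      have hdle : d ≤ 2 * ((f n : ℝ) / n) := by
        have heq : 2 * ((f n : ℝ) / n) = (f n : ℝ) / ((n:ℝ)/2) := by
          rw [div_div_eq_mul_div]; ring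
        rw [hddef, heq]
        exact div_le_div_of_nonneg_left hg0 (by linarith) hxg2
      have hρle2 : ρ ≤ ε / (32 * M) := min_le_right _ _
      have h2b : (f n : ℝ) / n ≤ ρ := h2.le
      have h32 : 2 * (ε / (32 * M)) = ε / (16 * M) := by
        field_simp
        ring
      linarith [hdle, mul_le_mul_of_nonneg_left (h2b.trans hρle2) (by norm_num : (0:ℝ) ≤ 2)]
    -- the key identity
    have hid : (n:ℝ) * V n s - 1 / I θt
        = c * (((n:ℝ) - (f n:ℝ)) * V n s - 1 / I s) + d * (1 / I s)
          + (1 / I s - 1 / I θt) := by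
      have hIs0 : I s ≠ 0 := (hI_pos s hs).ne'
      rw [hcdef, hddef]
      field_simp
      ring
    rw [hid]
    have b1 : |c * (((n:ℝ) - (f n:ℝ)) * V n s - 1 / I s)| ≤ 2 * (ε/16) := by
      rw [abs_mul, abs_of_nonneg hc0]
      exact mul_le_mul hc2 hD.le (abs_nonneg _) (by norm_num)
    have b2 : |d * (1 / I s)| ≤ (ε / (16 * M)) * M := by
      rw [abs_mul, abs_of_nonneg hd0]
      exact mul_le_mul hd2 hIs (abs_nonneg _) (by positivity)
    have b3 : |1 / I s - 1 / I θt| ≤ ε/8 := le_of_lt (lt_of_lt_of_le hΔ (min_le_left _ _))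
    have hMε : (ε / (16 * M)) * M = ε / 16 := by
      field_simp
    calc |c * (((n:ℝ) - (f n:ℝ)) * V n s - 1 / I s) + d * (1 / I s) + (1 / I s - 1 / I θt)|
        ≤ |c * (((n:ℝ) - (f n:ℝ)) * V n s - 1 / I s) + d * (1 / I s)| + |1 / I s - 1 / I θt| :=
          abs_add_le _ _
      _ ≤ |c * (((n:ℝ) - (f n:ℝ)) * V n s - 1 / I s)| + |d * (1 / I s)| + |1 / I s - 1 / I θt| := by
          linarith [abs_add_le (c * (((n:ℝ) - (f n:ℝ)) * V n s - 1 / I s)) (d * (1 / I s))]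
      _ ≤ 2 * (ε/16) + (ε / (16 * M)) * M + ε/8 := by linarith
      _ ≤ ε/2 := by rw [hMε]; linarith
  -- split the integral
  set A : Set ℝ := Γ ∩ {s : ℝ | |s - θt| ≤ δ'} with hAdef
  set B : Set ℝ := Γ ∩ T with hBdef
  have hAmeas : MeasurableSet A := hΓmeas.inter hNmeas
  have hBmeas : MeasurableSet B := hΓmeas.inter hTmeas
  have hAΓ : A ⊆ Γ := Set.inter_subset_left
  have hBΓ : B ⊆ Γ := Set.inter_subset_left
  have hdisj : Disjoint A B := by
    refine Set.disjoint_left.2 ?_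
    rintro x ⟨_, hx1⟩ ⟨_, hx2⟩
    rw [hTdef] at hx2
    simp only [Set.mem_setOf_eq] at hx1 hx2
    exact absurd hx2 (not_lt.2 hx1)
  have hunion : A ∪ B = Γ := by
    rw [hAdef, hBdef, hTdef, ← Set.inter_union_distrib_left]
    have : {s : ℝ | |s - θt| ≤ δ'} ∪ {s : ℝ | δ' < |s - θt|} = Set.univ := by
      ext x; simp [le_or_gt]
    rw [this, Set.inter_univ]
  have hIntA := hInt n A hAmeas hAΓ
  have hIntB := hInt n B hBmeas hBΓ
  have hsplit : ∫ s in Γ, V n s ∂(μ n) = (∫ s in A, V n s ∂(μ n)) + ∫ s in B, V n s ∂(μ n) := by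
    rw [← setIntegral_union hdisj hBmeas hIntA hIntB, hunion]
  -- measure bookkeeping
  have hμA_ne : μ n A ≠ ∞ := (measure_lt_top _ _).ne
  have hμB_ne : μ n B ≠ ∞ := (measure_lt_top _ _).ne
  have hμsum : (μ n A).toReal + (μ n B).toReal = 1 := by
    have h := measure_union (μ := μ n) hdisj hBmeas
    rw [hunion, hμΓ1 n] at h
    have := congrArg ENNReal.toReal h
    rw [ENNReal.toReal_add hμA_ne hμB_ne] at this
    simpa using this.symm
  have hμA_le1 : (μ n A).toReal ≤ 1 := by
    have : (0:ℝ) ≤ (μ n B).toReal := ENNReal.toReal_nonneg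
    linarith
  have hμA_nonneg : (0:ℝ) ≤ (μ n A).toReal := ENNReal.toReal_nonneg
  have hμB_le : (μ n B).toReal ≤ (n : ℝ) * (μ n T).toReal := by
    have hle : (μ n B).toReal ≤ (μ n T).toReal :=
      ENNReal.toReal_mono (measure_lt_top _ _).ne (measure_mono Set.inter_subset_right)
    exact hle.trans (le_mul_of_one_le_left ENNReal.toReal_nonneg hx1)
  have hμB_lt : (μ n B).toReal < η := lt_of_le_of_lt hμB_le h3
  -- bound 1 : central part
  have bound1 : |(n:ℝ) * (∫ s in A, V n s ∂(μ n)) - (1 / I θt) * (μ n A).toReal| ≤ ε/2 := by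
    have heq : (n:ℝ) * (∫ s in A, V n s ∂(μ n)) - (1 / I θt) * (μ n A).toReal
        = ∫ s in A, ((n:ℝ) * V n s - 1 / I θt) ∂(μ n) := by
      rw [integral_sub (hIntA.const_mul _) (integrableOn_const (measure_lt_top _ _).ne)]
      rw [integral_const_mul, setIntegral_const]
      simp [smul_eq_mul]
      exact mul_comm _ _
    rw [heq]
    have hb := norm_setIntegral_le_of_norm_le_const (μ := μ n) (s := A)
      (f := fun s => (n:ℝ) * V n s - 1 / I θt) (C := ε/2) (measure_lt_top _ _)
      (fun x hx => by
        rw [Real.norm_eq_abs]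
        exact key x (hAΓ hx) hx.2)
    rw [Real.norm_eq_abs] at hb
    calc |∫ s in A, ((n:ℝ) * V n s - 1 / I θt) ∂(μ n)| ≤ ε/2 * (μ n A).toReal := hb
      _ ≤ ε/2 * 1 := mul_le_mul_of_nonneg_left hμA_le1 (by positivity)
      _ = ε/2 := mul_one _
  -- bound 2 : tail part
  have hIntB_nonneg : 0 ≤ ∫ s in B, V n s ∂(μ n) :=
    setIntegral_nonneg hBmeas (fun x _ => hV_nonneg n x)
  have bound2 : (n:ℝ) * (∫ s in B, V n s ∂(μ n)) ≤ ε/8 := by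
    have hb := norm_setIntegral_le_of_norm_le_const (μ := μ n) (s := B)
      (f := V n) (C := C₁) (measure_lt_top _ _)
      (fun x hx => by
        rw [Real.norm_of_nonneg (hV_nonneg n x)]
        exact hC₁ n x (hBΓ hx))
    rw [Real.norm_of_nonneg hIntB_nonneg] at hb
    have hle : (μ n B).toReal ≤ (μ n T).toReal :=
      ENNReal.toReal_mono (measure_lt_top _ _).ne (measure_mono Set.inter_subset_right)
    have hη1 : η ≤ ε / (8 * C₁) := min_le_left _ _
    calc (n:ℝ) * (∫ s in B, V n s ∂(μ n))
        ≤ (n:ℝ) * (C₁ * (μ n B).toReal) := mul_le_mul_of_nonneg_left hb hxpos.le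
      _ = C₁ * ((n:ℝ) * (μ n B).toReal) := by ring
      _ ≤ C₁ * ((n:ℝ) * (μ n T).toReal) :=
          mul_le_mul_of_nonneg_left (mul_le_mul_of_nonneg_left hle hxpos.le) hC₁pos.le
      _ ≤ C₁ * η := mul_le_mul_of_nonneg_left h3.le hC₁pos.le
      _ ≤ C₁ * (ε / (8 * C₁)) := mul_le_mul_of_nonneg_left hη1 hC₁pos.le
      _ = ε/8 := by
          field_simp
  -- bound 3 : mass defect
  have bound3 : (1 / I θt) * |(μ n A).toReal - 1| ≤ ε/8 := by
    have h1 : |(μ n A).toReal - 1| = (μ n B).toReal := by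
      rw [abs_of_nonpos (by linarith), neg_sub]
      linarith
    rw [h1]
    have hη2 : η ≤ ε / 8 * I θt := min_le_right _ _
    have hstep : (1 / I θt) * (μ n B).toReal ≤ (1 / I θt) * η :=
      mul_le_mul_of_nonneg_left hμB_lt.le hLpos.le
    have hstep2 : (1 / I θt) * η ≤ (1 / I θt) * (ε / 8 * I θt) :=
      mul_le_mul_of_nonneg_left hη2 hLpos.le
    have hfin : (1 / I θt) * (ε / 8 * I θt) = ε/8 := by
      field_simp
    linarith
  -- combine everything
  rw [Real.dist_eq, hsplit]
  have hfinal : (n:ℝ) * ((∫ s in A, V n s ∂(μ n)) + ∫ s in B, V n s ∂(μ n)) - 1 / I θt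
      = ((n:ℝ) * (∫ s in A, V n s ∂(μ n)) - (1 / I θt) * (μ n A).toReal)
        + (n:ℝ) * (∫ s in B, V n s ∂(μ n))
        + (1 / I θt) * ((μ n A).toReal - 1) := by ring
  rw [hfinal]
  have hBnn : 0 ≤ (n:ℝ) * (∫ s in B, V n s ∂(μ n)) := by positivity
  calc |((n:ℝ) * (∫ s in A, V n s ∂(μ n)) - (1 / I θt) * (μ n A).toReal)
        + (n:ℝ) * (∫ s in B, V n s ∂(μ n)) + (1 / I θt) * ((μ n A).toReal - 1)|
      ≤ |((n:ℝ) * (∫ s in A, V n s ∂(μ n)) - (1 / I θt) * (μ n A).toReal)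
        + (n:ℝ) * (∫ s in B, V n s ∂(μ n))| + |(1 / I θt) * ((μ n A).toReal - 1)| := abs_add_le _ _
    _ ≤ |(n:ℝ) * (∫ s in A, V n s ∂(μ n)) - (1 / I θt) * (μ n A).toReal|
        + |(n:ℝ) * (∫ s in B, V n s ∂(μ n))| + |(1 / I θt) * ((μ n A).toReal - 1)| := by
        linarith [abs_add_le ((n:ℝ) * (∫ s in A, V n s ∂(μ n)) - (1 / I θt) * (μ n A).toReal)
          ((n:ℝ) * (∫ s in B, V n s ∂(μ n)))]
    _ ≤ ε/2 + ε/8 + ε/8 := by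
        have e2 : |(n:ℝ) * (∫ s in B, V n s ∂(μ n))| ≤ ε/8 := by
          rw [abs_of_nonneg hBnn]; exact bound2
        have e3 : |(1 / I θt) * ((μ n A).toReal - 1)| ≤ ε/8 := by
          rw [abs_mul, abs_of_pos hLpos]; exact bound3
        linarith
    _ < ε := by linarith
end

section
/- Under conditions (HM3) and (HM4), the contribution to the normalized overall MSE from preliminary outcomes near the true parameter is asymptotically at most the inverse Fisher information: for every ε > 0 there exists δ > 0 such that limsup_{n→∞} n·∫_{{s ∈ Γ : |s − θ_t| ≤ δ}} V_n(s) dμ_n(s) ≤ 1/I(θ_t) + ε. -/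
open MeasureTheory Filter Topology ENNReal

/-- Under conditions (HM3) and (HM4), the contribution to the normalized overall MSE
from preliminary outcomes near the true parameter is asymptotically at most the inverse
Fisher information: for every ε > 0 there exists δ > 0 such that
`limsup_{n→∞} n·∫_{{s ∈ Γ : |s − θ_t| ≤ δ}} V_n(s) dμ_n(s) ≤ 1/I(θ_t) + ε`. -/
theorem two_stage_mse_near_contribution_limsup
    (θt : ℝ) (Γ : Set ℝ) (hΓmeas : MeasurableSet Γ) (hΓnbhd : Γ ∈ nhds θt)
    (f : ℕ → ℕ) (hf_lt : ∀ n, 1 ≤ n → f n < n)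
    (hf_top : Tendsto f atTop atTop)
    (hf_ratio : Tendsto (fun n => (f n : ℝ) / n) atTop (𝓝 0))
    (μ : ℕ → Measure ℝ) [∀ n, IsProbabilityMeasure (μ n)]
    (hμΓ : ∀ n, μ n Γᶜ = 0)
    (V : ℕ → ℝ → ℝ) (hV_meas : ∀ n, Measurable (V n))
    (hV_nonneg : ∀ n s, 0 ≤ V n s)
    (I : ℝ → ℝ) (hI_pos : ∀ s ∈ Γ, 0 < I s)
    -- (HM3) uniform convergence of (n − f(n))·V_n(s) to 1/I(s) near θ_t
    (HM3 : ∀ δ > (0 : ℝ), ∀ ε > (0 : ℝ), ∃ n₀ : ℕ, ∀ n > n₀, ∀ s ∈ Γ,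
      |s - θt| ≤ δ → |((n : ℝ) - (f n : ℝ)) * V n s - 1 / I s| < ε)
    -- (HM4) the Fisher information is continuous on Γ
    (HM4 : ContinuousOn I Γ) :
    ∀ ε > (0 : ℝ), ∃ δ > (0 : ℝ),
      Filter.limsup
        (fun n : ℕ => (n : ℝ) * ∫ s in Γ ∩ {s | |s - θt| ≤ δ}, V n s ∂(μ n)) atTop
        ≤ 1 / I θt + ε := by
  intro ε hε
  have hθΓ : θt ∈ Γ := mem_of_mem_nhds hΓnbhd
  have hIθ : 0 < I θt := hI_pos θt hθΓ
  -- continuity of 1/I at θt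
  have hcont : Tendsto (fun s => 1 / I s) (𝓝 θt) (𝓝 (1 / I θt)) := by
    have h1 : ContinuousWithinAt (fun s => 1 / I s) Γ θt :=
      (continuousOn_const.div HM4 (fun s hs => (hI_pos s hs).ne')) θt hθΓ
    rwa [ContinuousWithinAt, nhdsWithin_eq_nhds.mpr hΓnbhd] at h1
  have hev : ∀ᶠ s in 𝓝 θt, |1 / I s - 1 / I θt| < ε / 4 := by
    have h := hcont (Metric.ball_mem_nhds (1 / I θt) (by positivity : (0:ℝ) < ε / 4))
    filter_upwards [h] with s hs
    simpa [Real.dist_eq] using hs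
  obtain ⟨δ₀, hδ₀pos, hδ₀⟩ := Metric.eventually_nhds_iff.mp hev
  set δ : ℝ := δ₀ / 2 with hδdef
  have hδpos : 0 < δ := by positivity
  refine ⟨δ, hδpos, ?_⟩
  set B : ℝ := 1 / I θt + ε / 2 with hBdef
  have hBpos : 0 < B := by positivity
  obtain ⟨n₀, hn₀⟩ := HM3 δ hδpos (ε / 4) (by positivity)
  set S : Set ℝ := Γ ∩ {s | |s - θt| ≤ δ} with hSdef
  set a : ℕ → ℝ := fun n => (n : ℝ) * ∫ s in S, V n s ∂(μ n) with hadef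
  -- pointwise bound on V n on S for large n
  have hVbound : ∀ n, n₀ < n → 1 ≤ n → ∀ s ∈ S, V n s ≤ B / ((n : ℝ) - f n) := by
    intro n hn hn1 s hs
    obtain ⟨hsΓ, hsδ⟩ := hs
    have hsδ' : |s - θt| ≤ δ := hsδ
    have hdist : dist s θt < δ₀ := by
      rw [Real.dist_eq]
      calc |s - θt| ≤ δ := hsδ'
        _ < δ₀ := by rw [hδdef]; linarith
    have hIs : |1 / I s - 1 / I θt| < ε / 4 := hδ₀ hdist
    have hH := hn₀ n hn s hsΓ hsδ'
    have hnf : (0 : ℝ) < (n : ℝ) - f n := by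
      have := hf_lt n hn1
      have : (f n : ℝ) < n := by exact_mod_cast this
      linarith
    have h1 : ((n : ℝ) - f n) * V n s < 1 / I s + ε / 4 := by
      have := abs_lt.mp hH
      linarith [this.2]
    have h2 : 1 / I s < 1 / I θt + ε / 4 := by
      have := abs_lt.mp hIs
      linarith [this.2]
    have h3 : ((n : ℝ) - f n) * V n s ≤ B := by
      rw [hBdef]; linarith
    rw [div_eq_mul_inv]
    calc V n s = (((n : ℝ) - f n) * V n s) * ((n : ℝ) - f n)⁻¹ := by
          field_simp
      _ ≤ B * ((n : ℝ) - f n)⁻¹ := by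
          apply mul_le_mul_of_nonneg_right h3 (by positivity)
  -- integral bound
  have haint : ∀ n, n₀ < n → 1 ≤ n → a n ≤ B * ((n : ℝ) / ((n : ℝ) - f n)) := by
    intro n hn hn1
    have hnf : (0 : ℝ) < (n : ℝ) - f n := by
      have := hf_lt n hn1
      have : (f n : ℝ) < n := by exact_mod_cast this
      linarith
    have hSfin : μ n S < ∞ := lt_of_le_of_lt (measure_mono Set.inter_subset_left)
      (by simpa using (measure_lt_top (μ n) Γ))
    have hnorm : ‖∫ s in S, V n s ∂(μ n)‖ ≤ (B / ((n : ℝ) - f n)) * (μ n S).toReal := by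
      apply norm_setIntegral_le_of_norm_le_const hSfin
      · intro s hs
        rw [Real.norm_eq_abs, abs_of_nonneg (hV_nonneg n s)]
        exact hVbound n hn hn1 s hs
    have hμle : (μ n S).toReal ≤ 1 := by
      have h1 : μ n S ≤ 1 := prob_le_one
      exact ENNReal.toReal_le_of_le_ofReal zero_le_one (by simpa using h1)
    have hI1 : ∫ s in S, V n s ∂(μ n) ≤ B / ((n : ℝ) - f n) := by
      calc ∫ s in S, V n s ∂(μ n) ≤ ‖∫ s in S, V n s ∂(μ n)‖ := le_abs_self _
        _ ≤ (B / ((n : ℝ) - f n)) * (μ n S).toReal := hnorm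
        _ ≤ (B / ((n : ℝ) - f n)) * 1 := by
            apply mul_le_mul_of_nonneg_left hμle (by positivity)
        _ = B / ((n : ℝ) - f n) := mul_one _
    have hn0 : (0 : ℝ) ≤ (n : ℝ) := Nat.cast_nonneg n
    calc a n = (n : ℝ) * ∫ s in S, V n s ∂(μ n) := rfl
      _ ≤ (n : ℝ) * (B / ((n : ℝ) - f n)) := mul_le_mul_of_nonneg_left hI1 hn0
      _ = B * ((n : ℝ) / ((n : ℝ) - f n)) := by ring
  -- the ratio tends to 1
  have hratio : Tendsto (fun n : ℕ => (n : ℝ) / ((n : ℝ) - f n)) atTop (𝓝 1) := by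
    have h1 : Tendsto (fun n : ℕ => 1 - (f n : ℝ) / n) atTop (𝓝 1) := by
      have h := Tendsto.sub (tendsto_const_nhds : Tendsto (fun _ : ℕ => (1:ℝ)) atTop (𝓝 1)) hf_ratio
      simpa using h
    have h2 : Tendsto (fun n : ℕ => (1 - (f n : ℝ) / n)⁻¹) atTop (𝓝 1) := by
      have h := h1.inv₀ one_ne_zero
      simpa using h
    apply h2.congr'
    filter_upwards [eventually_ge_atTop 1] with n hn
    have hnpos : (0 : ℝ) < n := by exact_mod_cast hn
    have hnf : (0 : ℝ) < (n : ℝ) - f n := by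
      have := hf_lt n hn
      have : (f n : ℝ) < n := by exact_mod_cast this
      linarith
    field_simp
  -- hence B * ratio tends to B < 1/I θt + ε
  have hg : Tendsto (fun n : ℕ => B * ((n : ℝ) / ((n : ℝ) - f n))) atTop (𝓝 B) := by
    have h := Tendsto.mul (tendsto_const_nhds : Tendsto (fun _ : ℕ => B) atTop (𝓝 B)) hratio
    simpa using h
  have hBlt : B < 1 / I θt + ε := by rw [hBdef]; linarith
  have hgev : ∀ᶠ n : ℕ in atTop, B * ((n : ℝ) / ((n : ℝ) - f n)) < 1 / I θt + ε :=
    hg.eventually_lt_const hBlt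
  have haev : ∀ᶠ n in atTop, a n ≤ 1 / I θt + ε := by
    filter_upwards [hgev, eventually_gt_atTop n₀, eventually_ge_atTop 1] with n h1 h2 h3
    exact le_of_lt (lt_of_le_of_lt (haint n h2 h3) h1)
  have hanonneg : ∀ n, 0 ≤ a n := by
    intro n
    apply mul_nonneg (Nat.cast_nonneg n)
    exact integral_nonneg (fun s => hV_nonneg n s)
  have hcobdd : IsCoboundedUnder (· ≤ ·) atTop a :=
    Filter.isCoboundedUnder_le_of_le atTop (fun n => hanonneg n)
  exact Filter.limsup_le_of_le hcobdd haev
end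

section
/- Suppose (i) the preliminary estimators are weakly consistent: Θ̂_p^n → θ_t in probability (under P₁); (ii) the nuisance estimators are weakly consistent: ϑ̂_i^n → ϑ_{t,i} in probability (under P₁) for every i = 1,…,u; and (iii) there exists δ > 0 such that the refinement estimators are uniformly weakly consistent on the neighborhood Ω_δ: for every ε > 0, sup_{(s,t) ∈ Ω_δ} P₂(|Θ̂_r^n(s,t,·) − θ_t| > ε) → 0 as n → ∞. Then the composite two-stage estimator is weakly consistent: T_n → θ_t in probability under P₁ ⊗ P₂. -/
open MeasureTheory Filter Topology ENNReal

/-- Weak consistency of the composite two-stage estimator: if the preliminary and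
nuisance estimators are weakly consistent, and the refinement estimators are uniformly
weakly consistent on a neighborhood `Ω_δ` of the true parameters, then the composite
two-stage estimator `T_n(ω₁,ω₂) = Θ̂_r^n(Θ̂_p^n(ω₁), ϑ̂^n(ω₁), ω₂)` converges to `θ_t`
in probability under `P₁ ⊗ P₂`. -/
theorem two_stage_weak_consistency
    {Ω₁ Ω₂ : Type*} [MeasurableSpace Ω₁] [MeasurableSpace Ω₂]
    (P₁ : Measure Ω₁) [IsProbabilityMeasure P₁]
    (P₂ : Measure Ω₂) [IsProbabilityMeasure P₂]
    (u : ℕ) (θt : ℝ) (ϑt : Fin u → ℝ)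
    (Θp : ℕ → Ω₁ → ℝ) (hΘp_meas : ∀ n, Measurable (Θp n))
    (ϑ : ℕ → Ω₁ → (Fin u → ℝ)) (hϑ_meas : ∀ n, Measurable (ϑ n))
    (Θr : ℕ → ℝ → (Fin u → ℝ) → Ω₂ → ℝ)
    (hΘr_meas : ∀ n,
      Measurable (fun p : ℝ × (Fin u → ℝ) × Ω₂ => Θr n p.1 p.2.1 p.2.2))
    -- (i) weak consistency of the preliminary estimator
    (hpre : TendstoInMeasure P₁ Θp atTop (fun _ => θt))
    -- (ii) weak consistency of each nuisance estimator
    (hnuis : ∀ i : Fin u,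
      TendstoInMeasure P₁ (fun n ω₁ => ϑ n ω₁ i) atTop (fun _ => ϑt i))
    -- (iii) uniform weak consistency of the refinement estimators on Ω_δ
    (href : ∃ δ > (0 : ℝ), ∀ ε > (0 : ℝ),
      Tendsto (fun n : ℕ =>
          ⨆ (s : ℝ) (t : Fin u → ℝ)
            (_ : |s - θt| ≤ δ ∧ ∀ i, |t i - ϑt i| ≤ δ),
            P₂ {ω₂ | ε < |Θr n s t ω₂ - θt|})
        atTop (𝓝 (0 : ℝ≥0∞))) :
    TendstoInMeasure (P₁.prod P₂)
      (fun n ω => Θr n (Θp n ω.1) (ϑ n ω.1) ω.2) atTop (fun _ => θt) := by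

  obtain ⟨δ, hδ, href⟩ := href
  rw [tendstoInMeasure_iff_dist]
  intro ε hε
  set S : ℕ → ℝ≥0∞ := fun n =>
    ⨆ (s : ℝ) (t : Fin u → ℝ)
      (_ : |s - θt| ≤ δ ∧ ∀ i, |t i - ϑt i| ≤ δ),
      P₂ {ω₂ | ε/2 < |Θr n s t ω₂ - θt|} with hSdef
  have hS : Tendsto S atTop (𝓝 0) := href (ε/2) (by linarith)
  have hB0 : Tendsto (fun n => P₁ {ω₁ | δ ≤ dist (Θp n ω₁) θt}) atTop (𝓝 0) := tendstoInMeasure_iff_dist.1 hpre δ hδ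
  have hB : ∀ i : Fin u,
      Tendsto (fun n => P₁ {ω₁ | δ ≤ dist (ϑ n ω₁ i) (ϑt i)}) atTop (𝓝 0) :=
    fun i => tendstoInMeasure_iff_dist.1 (hnuis i) δ hδ
  have hbound : ∀ n, (P₁.prod P₂) {ω | ε ≤ dist (Θr n (Θp n ω.1) (ϑ n ω.1) ω.2) θt}
      ≤ S n + (P₁ {ω₁ | δ ≤ dist (Θp n ω₁) θt}
          + ∑ i, P₁ {ω₁ | δ ≤ dist (ϑ n ω₁ i) (ϑt i)}) := by
    intro n
    -- measurability of the composite estimator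
    have hT : Measurable (fun ω : Ω₁ × Ω₂ => Θr n (Θp n ω.1) (ϑ n ω.1) ω.2) := by
      exact (hΘr_meas n).comp (((hΘp_meas n).comp measurable_fst).prodMk
        (((hϑ_meas n).comp measurable_fst).prodMk measurable_snd))
    have hmeasS : MeasurableSet {ω : Ω₁ × Ω₂ | ε ≤ dist (Θr n (Θp n ω.1) (ϑ n ω.1) ω.2) θt} :=
      measurableSet_le measurable_const (hT.dist measurable_const)
    -- the good set
    set A : Set Ω₁ := {ω₁ | |Θp n ω₁ - θt| ≤ δ ∧ ∀ i, |ϑ n ω₁ i - ϑt i| ≤ δ} with hAdef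
    have hAmeas : MeasurableSet A := by
      have hA2 : A = {ω₁ | |Θp n ω₁ - θt| ≤ δ} ∩ ⋂ i, {ω₁ | |ϑ n ω₁ i - ϑt i| ≤ δ} := by
        ext ω₁; simp [hAdef, Set.mem_iInter]
      rw [hA2]
      exact (measurableSet_le (((hΘp_meas n).sub measurable_const).abs) measurable_const).inter
        (MeasurableSet.iInter fun i => measurableSet_le
          ((((hϑ_meas n).eval).sub measurable_const).abs) measurable_const)
    have hprod : (P₁.prod P₂) {ω : Ω₁ × Ω₂ | ε ≤ dist (Θr n (Θp n ω.1) (ϑ n ω.1) ω.2) θt}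
        = ∫⁻ ω₁, P₂ {ω₂ | ε ≤ dist (Θr n (Θp n ω₁) (ϑ n ω₁) ω₂) θt} ∂P₁ := by
      rw [Measure.prod_apply hmeasS]
      rfl
    rw [hprod]
    -- pointwise bound
    have hpt : ∀ ω₁, P₂ {ω₂ | ε ≤ dist (Θr n (Θp n ω₁) (ϑ n ω₁) ω₂) θt}
        ≤ S n + Aᶜ.indicator (fun _ => 1) ω₁ := by
      intro ω₁
      by_cases hA : ω₁ ∈ A
      · have h1 : P₂ {ω₂ | ε ≤ dist (Θr n (Θp n ω₁) (ϑ n ω₁) ω₂) θt}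
            ≤ P₂ {ω₂ | ε/2 < |Θr n (Θp n ω₁) (ϑ n ω₁) ω₂ - θt|} := by
          apply measure_mono
          intro ω₂ hω₂
          simp only [Set.mem_setOf_eq, Real.dist_eq] at hω₂ ⊢
          linarith
        have h2 : P₂ {ω₂ | ε/2 < |Θr n (Θp n ω₁) (ϑ n ω₁) ω₂ - θt|} ≤ S n := by
          rw [hSdef]
          exact le_iSup_of_le (Θp n ω₁) (le_iSup_of_le (ϑ n ω₁) (le_iSup_of_le hA le_rfl))
        calc P₂ {ω₂ | ε ≤ dist (Θr n (Θp n ω₁) (ϑ n ω₁) ω₂) θt} ≤ S n := h1.trans h2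
          _ ≤ _ := le_self_add
      · have : Aᶜ.indicator (fun _ : Ω₁ => (1 : ℝ≥0∞)) ω₁ = 1 :=
          Set.indicator_of_mem hA 1
        rw [this]
        calc P₂ {ω₂ | ε ≤ dist (Θr n (Θp n ω₁) (ϑ n ω₁) ω₂) θt} ≤ 1 := prob_le_one
          _ ≤ S n + 1 := le_add_self
    calc ∫⁻ ω₁, P₂ {ω₂ | ε ≤ dist (Θr n (Θp n ω₁) (ϑ n ω₁) ω₂) θt} ∂P₁
        ≤ ∫⁻ ω₁, (S n + Aᶜ.indicator (fun _ => 1) ω₁) ∂P₁ := lintegral_mono hpt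
      _ = S n + P₁ Aᶜ := by
          rw [lintegral_add_left measurable_const, lintegral_const,
            lintegral_indicator hAmeas.compl]
          simp [measure_univ]
      _ ≤ S n + (P₁ {ω₁ | δ ≤ dist (Θp n ω₁) θt}
            + ∑ i, P₁ {ω₁ | δ ≤ dist (ϑ n ω₁ i) (ϑt i)}) := by
          gcongr
          have hsub : Aᶜ ⊆ {ω₁ | δ ≤ dist (Θp n ω₁) θt}
              ∪ ⋃ i, {ω₁ | δ ≤ dist (ϑ n ω₁ i) (ϑt i)} := by
            intro ω₁ hω₁
            rw [hAdef] at hω₁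
            simp only [Set.mem_compl_iff, Set.mem_setOf_eq, not_and_or, not_forall,
              not_le] at hω₁
            rcases hω₁ with h | ⟨i, hi⟩
            · left; simp only [Set.mem_setOf_eq, Real.dist_eq]; linarith
            · right
              exact Set.mem_iUnion.2 ⟨i, by
                simp only [Set.mem_setOf_eq, Real.dist_eq]; linarith⟩
          calc P₁ Aᶜ ≤ P₁ ({ω₁ | δ ≤ dist (Θp n ω₁) θt}
                ∪ ⋃ i, {ω₁ | δ ≤ dist (ϑ n ω₁ i) (ϑt i)}) := measure_mono hsub
            _ ≤ P₁ {ω₁ | δ ≤ dist (Θp n ω₁) θt}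
                + P₁ (⋃ i, {ω₁ | δ ≤ dist (ϑ n ω₁ i) (ϑt i)}) := measure_union_le _ _
            _ ≤ _ := by gcongr; exact measure_iUnion_fintype_le _ _
  have hlim : Tendsto (fun n => S n + (P₁ {ω₁ | δ ≤ dist (Θp n ω₁) θt}
      + ∑ i, P₁ {ω₁ | δ ≤ dist (ϑ n ω₁ i) (ϑt i)})) atTop (𝓝 0) := by
    have := hS.add (hB0.add (tendsto_finset_sum Finset.univ fun i _ => hB i))
    simpa using this
  exact tendsto_of_tendsto_of_tendsto_of_le_of_le tendsto_const_nhds hlim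
    (fun n => zero_le) hbound
end

section
/- Suppose (i) the preliminary estimators are strongly consistent: Θ̂_p^n → θ_t almost surely (under P₁); (ii) the nuisance estimators are strongly consistent: ϑ̂_i^n → ϑ_{t,i} almost surely (under P₁) for every i = 1,…,u; and (iii) there exists δ > 0 such that the refinement estimators are uniformly strongly consistent on the neighborhood Ω_δ: for P₂-almost every ω₂, sup_{(s,t) ∈ Ω_δ} |Θ̂_r^n(s,t,ω₂) − θ_t| → 0 as n → ∞. Then the composite two-stage estimator is strongly consistent: T_n → θ_t almost surely under P₁ ⊗ P₂. -/
open MeasureTheory Filter Topology ENNReal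

theorem Metric.setOf_abs_sub_le_mem_nhds {ι : Type*} [Fintype ι] {a : ℝ} {b : ι → ℝ} {δ : ℝ}
    (hδ : 0 < δ) :
    {p : ℝ × (ι → ℝ) | |p.1 - a| ≤ δ ∧ ∀ i, |p.2 i - b i| ≤ δ} ∈ 𝓝 (a, b) := by
  convert Metric.closedBall_mem_nhds (a, b) hδ using 1
  ext p
  simp only [Metric.mem_closedBall, Prod.dist_eq, max_le_iff, dist_pi_le_iff hδ.le,
    Real.dist_eq, Set.mem_ofPred_eq]

theorem TendstoUniformlyOn.tendsto_comp_of_mem_nhds {α β ι : Type*} [TopologicalSpace α]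
    [UniformSpace β] {F : ι → α → β} {c : β} {l : Filter ι} {s : Set α} {x : α} {g : ι → α}
    (hF : TendstoUniformlyOn F (fun _ => c) l s) (hs : s ∈ 𝓝 x) (hg : Tendsto g l (𝓝 x)) :
    Tendsto (fun n => F n (g n)) l (𝓝 c) :=
  hF.tendsto_comp continuousWithinAt_const (nhdsWithin_eq_nhds.2 hs ▸ hg)

theorem MeasureTheory.Measure.ae_prod_of_ae_of_ae {α β : Type*} [MeasurableSpace α]
    [MeasurableSpace β] {μ : Measure α} {ν : Measure β} [SFinite ν] {p : α → Prop}
    {q : β → Prop} (hp : ∀ᵐ x ∂μ, p x) (hq : ∀ᵐ y ∂ν, q y) :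
    ∀ᵐ z ∂μ.prod ν, p z.1 ∧ q z.2 :=
  (quasiMeasurePreserving_fst.ae hp).and (quasiMeasurePreserving_snd.ae hq)

theorem two_stage_strong_consistency_general
    {Ω₁ Ω₂ : Type*} [MeasurableSpace Ω₁] [MeasurableSpace Ω₂]
    (P₁ : Measure Ω₁)
    (P₂ : Measure Ω₂) [IsProbabilityMeasure P₂]
    (u : ℕ) (θt : ℝ) (ϑt : Fin u → ℝ)
    (Θp : ℕ → Ω₁ → ℝ)
    (ϑ : ℕ → Ω₁ → (Fin u → ℝ))
    (Θr : ℕ → ℝ → (Fin u → ℝ) → Ω₂ → ℝ)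
    -- (i) strong consistency of the preliminary estimator
    (hpre : ∀ᵐ ω₁ ∂P₁, Tendsto (fun n => Θp n ω₁) atTop (𝓝 θt))
    -- (ii) strong consistency of each nuisance estimator
    (hnuis : ∀ i : Fin u,
      ∀ᵐ ω₁ ∂P₁, Tendsto (fun n => ϑ n ω₁ i) atTop (𝓝 (ϑt i)))
    -- (iii) uniform strong consistency of the refinement estimators on Ω_δ
    (href : ∃ δ > (0 : ℝ), ∀ᵐ ω₂ ∂P₂,
      TendstoUniformlyOn (fun n (p : ℝ × (Fin u → ℝ)) => Θr n p.1 p.2 ω₂)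
        (fun _ => θt) atTop
        {p : ℝ × (Fin u → ℝ) | |p.1 - θt| ≤ δ ∧ ∀ i, |p.2 i - ϑt i| ≤ δ}) :
    ∀ᵐ ω ∂(P₁.prod P₂),
      Tendsto (fun n => Θr n (Θp n ω.1) (ϑ n ω.1) ω.2) atTop (𝓝 θt) := by
  obtain ⟨δ, hδ, href⟩ := href
  have hfirst : ∀ᵐ ω₁ ∂P₁, Tendsto (fun n => (Θp n ω₁, ϑ n ω₁)) atTop (𝓝 (θt, ϑt)) := by
    filter_upwards [hpre, ae_all_iff.2 hnuis] with ω₁ hp hn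
    exact hp.prodMk_nhds (tendsto_pi_nhds.2 hn)
  filter_upwards [Measure.ae_prod_of_ae_of_ae hfirst href] with ω ⟨hω₁, hω₂⟩
  exact hω₂.tendsto_comp_of_mem_nhds (Metric.setOf_abs_sub_le_mem_nhds hδ) hω₁

/-- Strong consistency of the composite two-stage estimator: if the preliminary and
nuisance estimators are strongly consistent, and the refinement estimators are uniformly
strongly consistent on a neighborhood `Ω_δ` of the true parameters (for `P₂`-almost every
`ω₂`, `sup_{(s,t) ∈ Ω_δ} |Θ̂_r^n(s,t,ω₂) − θ_t| → 0`), then the composite two-stage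
estimator `T_n(ω₁,ω₂) = Θ̂_r^n(Θ̂_p^n(ω₁), ϑ̂^n(ω₁), ω₂)` converges to `θ_t` almost
surely under `P₁ ⊗ P₂`. -/
theorem two_stage_strong_consistency
    {Ω₁ Ω₂ : Type*} [MeasurableSpace Ω₁] [MeasurableSpace Ω₂]
    (P₁ : Measure Ω₁) [IsProbabilityMeasure P₁]
    (P₂ : Measure Ω₂) [IsProbabilityMeasure P₂]
    (u : ℕ) (θt : ℝ) (ϑt : Fin u → ℝ)
    (Θp : ℕ → Ω₁ → ℝ) (hΘp_meas : ∀ n, Measurable (Θp n))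
    (ϑ : ℕ → Ω₁ → (Fin u → ℝ)) (hϑ_meas : ∀ n, Measurable (ϑ n))
    (Θr : ℕ → ℝ → (Fin u → ℝ) → Ω₂ → ℝ)
    (hΘr_meas : ∀ n,
      Measurable (fun p : ℝ × (Fin u → ℝ) × Ω₂ => Θr n p.1 p.2.1 p.2.2))
    -- (i) strong consistency of the preliminary estimator
    (hpre : ∀ᵐ ω₁ ∂P₁, Tendsto (fun n => Θp n ω₁) atTop (𝓝 θt))
    -- (ii) strong consistency of each nuisance estimator
    (hnuis : ∀ i : Fin u,
      ∀ᵐ ω₁ ∂P₁, Tendsto (fun n => ϑ n ω₁ i) atTop (𝓝 (ϑt i)))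
    -- (iii) uniform strong consistency of the refinement estimators on Ω_δ
    (href : ∃ δ > (0 : ℝ), ∀ᵐ ω₂ ∂P₂,
      TendstoUniformlyOn (fun n (p : ℝ × (Fin u → ℝ)) => Θr n p.1 p.2 ω₂)
        (fun _ => θt) atTop
        {p : ℝ × (Fin u → ℝ) | |p.1 - θt| ≤ δ ∧ ∀ i, |p.2 i - ϑt i| ≤ δ}) :
    ∀ᵐ ω ∂(P₁.prod P₂),
      Tendsto (fun n => Θr n (Θp n ω.1) (ϑ n ω.1) ω.2) atTop (𝓝 θt) :=
  two_stage_strong_consistency_general P₁ P₂ u θt ϑt Θp ϑ Θr hpre hnuis href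
end

section
/- Suppose (i) Θ̂_p^n → θ_t in probability and ϑ̂_i^n → ϑ_{t,i} in probability for every i; (ii) there exists δ > 0 such that the refinement estimators are uniformly asymptotically normal on Ω_δ: for every z ∈ ℝ, sup_{(s,t) ∈ Ω_δ} |P₂( √(n − f(n))·(Θ̂_r^n(s,t,·) − θ_t) ≤ z ) − Φ(z·√(I(s,t)))| → 0 as n → ∞; and (iii) I is continuous at (θ_t, ϑ_t). Then the composite two-stage estimator is asymptotically normal with variance equal to the inverse Fisher information at the true parameters: for every z ∈ ℝ, P₁⊗P₂( √(n − f(n))·(T_n − θ_t) ≤ z ) → Φ(z·√(I(θ_t,ϑ_t))) as n → ∞; that is, √(n − f(n))·(T_n − θ_t) converges in distribution to a centered Gaussian with variance 1/I(θ_t,ϑ_t). -/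
open MeasureTheory Filter Topology ENNReal

/-- The standard normal cumulative distribution function
`Φ(x) = (1/√(2π)) ∫_{−∞}^x e^{−t²/2} dt`. -/
noncomputable def stdGaussCDF (x : ℝ) : ℝ :=
  ∫ t in Set.Iic x, Real.exp (-t ^ 2 / 2) / Real.sqrt (2 * Real.pi)

lemma gauss_integrable :
    Integrable (fun t : ℝ => Real.exp (-t ^ 2 / 2) / Real.sqrt (2 * Real.pi)) := by
  have h : Integrable (fun t : ℝ => Real.exp (-(1/2 : ℝ) * t ^ 2)) :=
    integrable_exp_neg_mul_sq (by norm_num)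
  have h2 := h.div_const (Real.sqrt (2 * Real.pi))
  convert h2 using 2
  ring_nf

lemma gauss_total : ∫ t : ℝ, Real.exp (-t ^ 2 / 2) / Real.sqrt (2 * Real.pi) = 1 := by
  have h : ∫ t : ℝ, Real.exp (-(1/2 : ℝ) * t ^ 2) = Real.sqrt (Real.pi / (1/2)) :=
    integral_gaussian (1/2)
  have hpi : Real.sqrt (Real.pi / (1/2)) = Real.sqrt (2 * Real.pi) := by
    norm_num; ring_nf
  rw [show (fun t : ℝ => Real.exp (-t ^ 2 / 2) / Real.sqrt (2 * Real.pi))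
      = fun t : ℝ => Real.exp (-(1/2 : ℝ) * t ^ 2) / Real.sqrt (2 * Real.pi) by
    funext t; ring_nf]
  rw [integral_div, h, hpi, div_self]
  positivity

lemma stdGaussCDF_nonneg (x : ℝ) : 0 ≤ stdGaussCDF x := by
  apply integral_nonneg
  intro t; positivity

lemma stdGaussCDF_le_one (x : ℝ) : stdGaussCDF x ≤ 1 := by
  rw [stdGaussCDF, ← gauss_total]
  apply setIntegral_le_integral gauss_integrable
  filter_upwards with t using by positivity

lemma stdGaussCDF_sub {x y : ℝ} (h : x ≤ y) :
    stdGaussCDF y - stdGaussCDF x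
      = ∫ t in Set.Ioc x y, Real.exp (-t ^ 2 / 2) / Real.sqrt (2 * Real.pi) := by
  rw [stdGaussCDF, stdGaussCDF, ← Set.Iic_union_Ioc_eq_Iic h,
    setIntegral_union (Set.Iic_disjoint_Ioc le_rfl) measurableSet_Ioc
      gauss_integrable.integrableOn gauss_integrable.integrableOn]
  ring

lemma stdGaussCDF_lipschitz (x y : ℝ) :
    |stdGaussCDF y - stdGaussCDF x| ≤ |y - x| / Real.sqrt (2 * Real.pi) := by
  have key : ∀ a b : ℝ, a ≤ b →
      |stdGaussCDF b - stdGaussCDF a| ≤ |b - a| / Real.sqrt (2 * Real.pi) := by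
    intro a b hab
    rw [stdGaussCDF_sub hab, abs_of_nonneg (by apply integral_nonneg; intro t; positivity),
      abs_of_nonneg (by linarith)]
    calc ∫ t in Set.Ioc a b, Real.exp (-t ^ 2 / 2) / Real.sqrt (2 * Real.pi)
        ≤ ∫ _t in Set.Ioc a b, 1 / Real.sqrt (2 * Real.pi) := by
          apply setIntegral_mono_on gauss_integrable.integrableOn
            (integrableOn_const measure_Ioc_lt_top.ne) measurableSet_Ioc
          intro t _
          gcongr
          exact Real.exp_le_one_iff.2 (by nlinarith [sq_nonneg t])
      _ = (b - a) * (1 / Real.sqrt (2 * Real.pi)) := by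
          rw [setIntegral_const, measureReal_def, Real.volume_Ioc, smul_eq_mul, ENNReal.toReal_ofReal (by linarith)]
      _ = (b - a) / Real.sqrt (2 * Real.pi) := by ring
  rcases le_total x y with h | h
  · exact key x y h
  · rw [abs_sub_comm, abs_sub_comm y x]; exact key y x h

lemma stdGaussCDF_continuous : Continuous stdGaussCDF := by
  have hpos : (0:ℝ) < Real.sqrt (2 * Real.pi) := by positivity
  rw [Metric.continuous_iff]
  intro b ε hε
  refine ⟨ε * Real.sqrt (2 * Real.pi), by positivity, fun a ha => ?_⟩
  rw [Real.dist_eq] at *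
  calc |stdGaussCDF a - stdGaussCDF b| ≤ |a - b| / Real.sqrt (2 * Real.pi) :=
        stdGaussCDF_lipschitz b a
    _ < ε := by rw [div_lt_iff₀ hpos]; exact ha

/-- Asymptotic normality of the composite two-stage estimator: if the preliminary and
nuisance estimators are weakly consistent, the refinement estimators are uniformly
asymptotically normal on a neighborhood `Ω_δ` of the true parameters, and the Fisher
information `I` is continuous at the true parameters, then
`√(n − f(n))·(T_n − θ_t)` converges in distribution to `N(0, 1/I(θ_t,ϑ_t))`:
for every `z`, `P₁⊗P₂(√(n − f(n))·(T_n − θ_t) ≤ z) → Φ(z·√(I(θ_t,ϑ_t)))`. -/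
theorem two_stage_asymptotic_normality
    {Ω₁ Ω₂ : Type*} [MeasurableSpace Ω₁] [MeasurableSpace Ω₂]
    (P₁ : Measure Ω₁) [IsProbabilityMeasure P₁]
    (P₂ : Measure Ω₂) [IsProbabilityMeasure P₂]
    (u : ℕ) (θt : ℝ) (ϑt : Fin u → ℝ)
    (f : ℕ → ℕ) (hf_lt : ∀ n, 1 ≤ n → f n < n)
    (hf_top : Tendsto f atTop atTop)
    (hf_ratio : Tendsto (fun n => (f n : ℝ) / n) atTop (𝓝 0))
    (Θp : ℕ → Ω₁ → ℝ) (hΘp_meas : ∀ n, Measurable (Θp n))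
    (ϑ : ℕ → Ω₁ → (Fin u → ℝ)) (hϑ_meas : ∀ n, Measurable (ϑ n))
    (Θr : ℕ → ℝ → (Fin u → ℝ) → Ω₂ → ℝ)
    (hΘr_meas : ∀ n,
      Measurable (fun p : ℝ × (Fin u → ℝ) × Ω₂ => Θr n p.1 p.2.1 p.2.2))
    (I : ℝ → (Fin u → ℝ) → ℝ) (hI_pos : ∀ s t, 0 < I s t)
    -- (i) weak consistency of the preliminary and nuisance estimators
    (hpre : TendstoInMeasure P₁ Θp atTop (fun _ => θt))
    (hnuis : ∀ i : Fin u,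
      TendstoInMeasure P₁ (fun n ω₁ => ϑ n ω₁ i) atTop (fun _ => ϑt i))
    -- (ii) uniform asymptotic normality of the refinement estimators on Ω_δ:
    -- sup_{(s,t)∈Ω_δ} |P₂(√(n−f(n))·(Θ̂_r^n(s,t,·)−θ_t) ≤ z) − Φ(z·√I(s,t))| → 0
    (hnorm : ∃ δ > (0 : ℝ), ∀ z : ℝ,
      TendstoUniformlyOn
        (fun n (p : ℝ × (Fin u → ℝ)) =>
          (P₂ {ω₂ | Real.sqrt ((n - f n : ℕ) : ℝ) * (Θr n p.1 p.2 ω₂ - θt) ≤ z}).toReal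
            - stdGaussCDF (z * Real.sqrt (I p.1 p.2)))
        (fun _ => 0) atTop
        {p : ℝ × (Fin u → ℝ) | |p.1 - θt| ≤ δ ∧ ∀ i, |p.2 i - ϑt i| ≤ δ})
    -- (iii) continuity of the Fisher information at the true parameters
    (hIcont : ContinuousAt (fun p : ℝ × (Fin u → ℝ) => I p.1 p.2) (θt, ϑt)) :
    ∀ z : ℝ,
      Tendsto (fun n : ℕ =>
          ((P₁.prod P₂) {ω | Real.sqrt ((n - f n : ℕ) : ℝ) *
            (Θr n (Θp n ω.1) (ϑ n ω.1) ω.2 - θt) ≤ z}).toReal)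
        atTop (𝓝 (stdGaussCDF (z * Real.sqrt (I θt ϑt)))) := by
  obtain ⟨δ, hδpos, hUnif⟩ := hnorm
  intro z
  set c := stdGaussCDF (z * Real.sqrt (I θt ϑt)) with hc
  set G : ℝ × (Fin u → ℝ) → ℝ := fun p => stdGaussCDF (z * Real.sqrt (I p.1 p.2)) with hG
  set E : ℕ → Set (Ω₁ × Ω₂) := fun n => {ω | Real.sqrt ((n - f n : ℕ) : ℝ) *
    (Θr n (Θp n ω.1) (ϑ n ω.1) ω.2 - θt) ≤ z} with hE
  -- measurability of the events
  have hEmeas : ∀ n, MeasurableSet (E n) := by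
    intro n
    have hσ : Measurable (fun ω : Ω₁ × Ω₂ =>
        ((Θp n ω.1, ϑ n ω.1, ω.2) : ℝ × (Fin u → ℝ) × Ω₂)) :=
      ((hΘp_meas n).comp measurable_fst).prod
        (((hϑ_meas n).comp measurable_fst).prod measurable_snd)
    have hT : Measurable (fun ω : Ω₁ × Ω₂ => Θr n (Θp n ω.1) (ϑ n ω.1) ω.2) :=
      (hΘr_meas n).comp hσ
    exact measurableSet_le ((hT.sub measurable_const).const_mul _) measurable_const
  have hqmeas : ∀ n, Measurable (fun ω₁ => P₂ (Prod.mk ω₁ ⁻¹' E n)) := fun n =>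
    measurable_measure_prodMk_left (hEmeas n)
  -- q : the sectionwise probabilities
  set q : ℕ → Ω₁ → ℝ := fun n ω₁ => (P₂ (Prod.mk ω₁ ⁻¹' E n)).toReal with hq
  have hq_bd : ∀ n ω₁, q n ω₁ ∈ Set.Icc (0:ℝ) 1 := by
    intro n ω₁
    constructor
    · exact ENNReal.toReal_nonneg
    · calc (P₂ (Prod.mk ω₁ ⁻¹' E n)).toReal ≤ (P₂ Set.univ).toReal :=
            ENNReal.toReal_mono (measure_ne_top _ _) (measure_mono (Set.subset_univ _))
        _ = 1 := by simp
  have hq_int : ∀ n, Integrable (q n) P₁ := by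
    intro n
    refine Integrable.mono' (integrable_const 1)
      ((hqmeas n).ennreal_toReal.aestronglyMeasurable) ?_
    filter_upwards with ω₁
    rw [Real.norm_eq_abs, abs_of_nonneg (hq_bd n ω₁).1]
    exact (hq_bd n ω₁).2
  -- Fubini
  have hkey : ∀ n, ((P₁.prod P₂) (E n)).toReal = ∫ ω₁, q n ω₁ ∂P₁ := by
    intro n
    rw [Measure.prod_apply (hEmeas n), ← integral_toReal ((hqmeas n).aemeasurable)
      (Filter.Eventually.of_forall fun ω₁ => measure_lt_top _ _)]
  -- continuity of G at (θt, ϑt)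
  have hGcont : ContinuousAt G (θt, ϑt) :=
    stdGaussCDF_continuous.continuousAt.comp
      (continuousAt_const.mul (Real.continuous_sqrt.continuousAt.comp hIcont))
  -- main estimate
  rw [Metric.tendsto_atTop]
  intro ε hε
  set ε' : ℝ := ε / 4 with hε'
  have hε'pos : 0 < ε' := by positivity
  obtain ⟨δ₀, hδ₀pos, hδ₀⟩ := Metric.continuousAt_iff.1 hGcont ε' hε'pos
  set δ' : ℝ := min δ (δ₀ / 2) with hδ'
  have hδ'pos : 0 < δ' := lt_min hδpos (by positivity)
  have hδ'leδ : δ' ≤ δ := min_le_left _ _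
  have hδ'ltδ₀ : δ' < δ₀ := lt_of_le_of_lt (min_le_right _ _) (by linarith)
  -- uniform convergence : eventually the sup bound holds
  have hU := (Metric.tendstoUniformlyOn_iff.1 (hUnif z)) ε' hε'pos
  -- consistency : eventually the bad set is small
  set A : ℕ → Set Ω₁ := fun n =>
    {ω₁ | |Θp n ω₁ - θt| ≤ δ' ∧ ∀ i, |ϑ n ω₁ i - ϑt i| ≤ δ'} with hA
  have hAmeas : ∀ n, MeasurableSet (A n) := by
    intro n
    have : A n = {ω₁ | |Θp n ω₁ - θt| ≤ δ'} ∩ ⋂ i, {ω₁ | |ϑ n ω₁ i - ϑt i| ≤ δ'} := by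
      ext ω; simp [hA, Set.mem_iInter]
    rw [this]
    refine MeasurableSet.inter ?_ (MeasurableSet.iInter fun i => ?_)
    · exact measurableSet_le ((hΘp_meas n).sub measurable_const).abs measurable_const
    · exact measurableSet_le (((measurable_pi_apply i).comp (hϑ_meas n)).sub
        measurable_const).abs measurable_const
  have hAc_le : ∀ n, P₁ (A n)ᶜ ≤ P₁ {ω₁ | δ' ≤ dist (Θp n ω₁) θt}
      + ∑ i, P₁ {ω₁ | δ' ≤ dist (ϑ n ω₁ i) (ϑt i)} := by
    intro n
    have hsub : (A n)ᶜ ⊆ {ω₁ | δ' ≤ dist (Θp n ω₁) θt}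
        ∪ ⋃ i, {ω₁ | δ' ≤ dist (ϑ n ω₁ i) (ϑt i)} := by
      intro ω hω
      simp only [hA, Set.mem_compl_iff, Set.mem_setOf_eq, not_and_or, not_forall, not_le] at hω
      rcases hω with h | ⟨i, h⟩
      · left; simp only [Set.mem_setOf_eq, Real.dist_eq]; linarith
      · right
        exact Set.mem_iUnion.2 ⟨i, by simp only [Set.mem_setOf_eq, Real.dist_eq]; linarith⟩
    calc P₁ (A n)ᶜ ≤ P₁ ({ω₁ | δ' ≤ dist (Θp n ω₁) θt}
          ∪ ⋃ i, {ω₁ | δ' ≤ dist (ϑ n ω₁ i) (ϑt i)}) := measure_mono hsub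
      _ ≤ P₁ {ω₁ | δ' ≤ dist (Θp n ω₁) θt}
          + P₁ (⋃ i, {ω₁ | δ' ≤ dist (ϑ n ω₁ i) (ϑt i)}) := measure_union_le _ _
      _ ≤ _ := by
          gcongr
          exact measure_iUnion_fintype_le _ _
  have hsum0 : Tendsto (fun n => P₁ {ω₁ | δ' ≤ dist (Θp n ω₁) θt}
      + ∑ i, P₁ {ω₁ | δ' ≤ dist (ϑ n ω₁ i) (ϑt i)}) atTop (𝓝 0) := by
    have h0 := tendstoInMeasure_iff_dist.1 hpre δ' hδ'pos
    have h1 : Tendsto (fun n => ∑ i, P₁ {ω₁ | δ' ≤ dist (ϑ n ω₁ i) (ϑt i)})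
        atTop (𝓝 (∑ _i : Fin u, (0:ℝ≥0∞))) :=
      tendsto_finset_sum _ fun i _ => tendstoInMeasure_iff_dist.1 (hnuis i) δ' hδ'pos
    simpa using h0.add h1
  have hsmall : ∀ᶠ n in atTop, (P₁ (A n)ᶜ).toReal < ε' := by
    have hev : ∀ᶠ n in atTop, (P₁ {ω₁ | δ' ≤ dist (Θp n ω₁) θt}
        + ∑ i, P₁ {ω₁ | δ' ≤ dist (ϑ n ω₁ i) (ϑt i)}) < ENNReal.ofReal ε' := by
      refine hsum0.eventually_lt_const ?_
      exact ENNReal.ofReal_pos.2 hε'pos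
    filter_upwards [hev] with n hn
    have hlt : P₁ (A n)ᶜ < ENNReal.ofReal ε' := lt_of_le_of_lt (hAc_le n) hn
    exact (ENNReal.lt_ofReal_iff_toReal_lt (measure_ne_top _ _)).1 hlt
  -- combine
  obtain ⟨N, hN⟩ := (hU.and hsmall).exists_forall_of_atTop
  refine ⟨N, fun n hn => ?_⟩
  obtain ⟨hn1, hn2⟩ := hN n hn
  -- pointwise bound on A n
  have hptA : ∀ ω₁ ∈ A n, |q n ω₁ - c| ≤ 2 * ε' := by
    intro ω₁ hω₁
    obtain ⟨h1, h2⟩ := hω₁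
    set p : ℝ × (Fin u → ℝ) := (Θp n ω₁, ϑ n ω₁) with hp
    have hpK : p ∈ {p : ℝ × (Fin u → ℝ) | |p.1 - θt| ≤ δ ∧ ∀ i, |p.2 i - ϑt i| ≤ δ} :=
      ⟨le_trans h1 hδ'leδ, fun i => le_trans (h2 i) hδ'leδ⟩
    have hF := hn1 p hpK
    rw [dist_comm, dist_zero_right, Real.norm_eq_abs] at hF
    have hsec : P₂ (Prod.mk ω₁ ⁻¹' E n)
        = P₂ {ω₂ | Real.sqrt ((n - f n : ℕ) : ℝ) * (Θr n p.1 p.2 ω₂ - θt) ≤ z} := rfl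
    have hqF : |q n ω₁ - G p| < ε' := by
      show |(P₂ (Prod.mk ω₁ ⁻¹' E n)).toReal - G p| < ε'
      rw [hsec]; exact hF
    have hdist : dist p (θt, ϑt) < δ₀ := by
      have : dist p (θt, ϑt) ≤ δ' := by
        rw [Prod.dist_eq]
        refine max_le ?_ ?_
        · rw [Real.dist_eq]; exact h1
        · exact (dist_pi_le_iff hδ'pos.le).2 fun i => by rw [Real.dist_eq]; exact h2 i
      linarith
    have hGc : |G p - c| < ε' := by
      have := hδ₀ hdist
      rwa [Real.dist_eq] at this
    calc |q n ω₁ - c| ≤ |q n ω₁ - G p| + |G p - c| := abs_sub_le _ _ _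
      _ ≤ 2 * ε' := by linarith
  -- pointwise bound everywhere
  have hc_bd : |c| ≤ 1 := by
    rw [abs_of_nonneg (stdGaussCDF_nonneg _)]
    exact stdGaussCDF_le_one _
  have hpt : ∀ ω₁, |q n ω₁ - c| ≤ 2 := by
    intro ω₁
    calc |q n ω₁ - c| ≤ |q n ω₁| + |c| := abs_sub _ _
      _ ≤ 1 + 1 := by
          refine add_le_add ?_ hc_bd
          rw [abs_of_nonneg (hq_bd n ω₁).1]; exact (hq_bd n ω₁).2
      _ = 2 := by norm_num
  -- integral estimate
  rw [Real.dist_eq, hkey n]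
  have habs_int : Integrable (fun ω₁ => |q n ω₁ - c|) P₁ :=
    ((hq_int n).sub (integrable_const c)).abs
  have step1 : |∫ ω₁, q n ω₁ ∂P₁ - c| ≤ ∫ ω₁, |q n ω₁ - c| ∂P₁ := by
    have hic : ∫ _ω₁, c ∂P₁ = c := by simp
    calc |∫ ω₁, q n ω₁ ∂P₁ - c| = |∫ ω₁, (q n ω₁ - c) ∂P₁| := by
          rw [integral_sub (hq_int n) (integrable_const c), hic]
      _ ≤ ∫ ω₁, |q n ω₁ - c| ∂P₁ := by
          simpa [Real.norm_eq_abs] using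
            norm_integral_le_integral_norm (fun ω₁ => q n ω₁ - c) (μ := P₁)
  have step2 : ∫ ω₁, |q n ω₁ - c| ∂P₁
      = (∫ ω₁ in A n, |q n ω₁ - c| ∂P₁) + ∫ ω₁ in (A n)ᶜ, |q n ω₁ - c| ∂P₁ :=
    (integral_add_compl (hAmeas n) habs_int).symm
  have step3 : (∫ ω₁ in A n, |q n ω₁ - c| ∂P₁) ≤ 2 * ε' := by
    calc (∫ ω₁ in A n, |q n ω₁ - c| ∂P₁) ≤ ∫ _ω₁ in A n, 2 * ε' ∂P₁ := by
          refine setIntegral_mono_on habs_int.integrableOn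
            (integrableOn_const (measure_lt_top _ _).ne) (hAmeas n) hptA
      _ = (P₁ (A n)).toReal * (2 * ε') := by rw [setIntegral_const, smul_eq_mul, measureReal_def]
      _ ≤ 1 * (2 * ε') := by
          refine mul_le_mul_of_nonneg_right ?_ (by positivity)
          calc (P₁ (A n)).toReal ≤ (P₁ Set.univ).toReal :=
                ENNReal.toReal_mono (measure_ne_top _ _) (measure_mono (Set.subset_univ _))
            _ = 1 := by simp
      _ = 2 * ε' := one_mul _
  have step4 : (∫ ω₁ in (A n)ᶜ, |q n ω₁ - c| ∂P₁) < 2 * ε' := by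
    calc (∫ ω₁ in (A n)ᶜ, |q n ω₁ - c| ∂P₁) ≤ ∫ _ω₁ in (A n)ᶜ, 2 ∂P₁ := by
          refine setIntegral_mono_on habs_int.integrableOn
            (integrableOn_const (measure_lt_top _ _).ne) (hAmeas n).compl
            fun ω₁ _ => hpt ω₁
      _ = (P₁ (A n)ᶜ).toReal * 2 := by rw [setIntegral_const, smul_eq_mul, measureReal_def]
      _ < ε' * 2 := by nlinarith [hn2, ENNReal.toReal_nonneg (a := P₁ (A n)ᶜ)]
      _ = 2 * ε' := by ring
  calc |∫ ω₁, q n ω₁ ∂P₁ - c| ≤ ∫ ω₁, |q n ω₁ - c| ∂P₁ := step1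
    _ = _ := step2
    _ < 2 * ε' + 2 * ε' := by linarith
    _ = ε := by rw [hε']; ring
end

section
/- Strong uniform law of large numbers: let Γ ⊆ ℝ be a compact set, (𝒳, 𝒜, ν) a probability space, and (X_i)_{i≥1} a sequence of i.i.d. 𝒳-valued random variables with common law ν. Let f : 𝒳 × Γ → ℝ be jointly measurable and suppose (a) for ν-almost every x, the map θ ↦ f(x,θ) is continuous on Γ; and (b) there exists a measurable g : 𝒳 → ℝ with |f(x,θ)| ≤ g(x) for all θ ∈ Γ and ν-almost every x, and ∫ g dν < ∞. Then almost surely, sup_{θ ∈ Γ} | (1/n) Σ_{i=1}^n f(X_i, θ) − ∫ f(x,θ) dν(x) | → 0 as n → ∞. -/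
open MeasureTheory Filter Topology

open ProbabilityTheory

lemma suLLN_envelope {𝒳 : Type*} [MeasurableSpace 𝒳] (ν : Measure 𝒳) [IsProbabilityMeasure ν]
    {f : 𝒳 → ℝ → ℝ} {g : 𝒳 → ℝ} {Γ : Set ℝ}
    (hf_meas : Measurable (Function.uncurry f))
    (hg : Measurable g) (hgi : Integrable g ν)
    (hb : ∀ x, ∀ θ ∈ Γ, |f x θ| ≤ g x)
    (hc : ∀ᵐ x ∂ν, ContinuousOn (f x) Γ)
    {θ0 : ℝ} (hθ0 : θ0 ∈ Γ) {ε : ℝ} (hε : 0 < ε) :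
    ∃ δ > 0, ∃ U : 𝒳 → ℝ, Measurable U ∧ (∀ x, |U x| ≤ g x) ∧
      (∀ᵐ x ∂ν, ∀ θ ∈ Γ ∩ Metric.ball θ0 δ, f x θ ≤ U x) ∧
      ∫ x, U x ∂ν ≤ ∫ x, f x θ0 ∂ν + ε := by
  -- dense sequences in shrinking compact neighborhoods of θ0
  have hK : ∀ m : ℕ, ∃ d : ℕ → ℝ,
      (∀ k, d k ∈ Γ ∩ Metric.closedBall θ0 (1/(m+1))) ∧
      (∀ θ ∈ Γ ∩ Metric.closedBall θ0 (1/(m+1)), ∀ r > (0:ℝ), ∃ k, |d k - θ| < r) := by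
    intro m
    set K := Γ ∩ Metric.closedBall θ0 (1/((m:ℝ)+1)) with hKdef
    have hne : K.Nonempty := ⟨θ0, hθ0, Metric.mem_closedBall_self (by positivity)⟩
    haveI : Nonempty K := hne.to_subtype
    obtain ⟨u, hu⟩ := TopologicalSpace.exists_dense_seq K
    refine ⟨fun k => (u k : ℝ), fun k => (u k).2, ?_⟩
    intro θ hθ r hr
    have hcl : (⟨θ, hθ⟩ : K) ∈ closure (Set.range u) := hu.closure_range ▸ Set.mem_univ _
    rw [Metric.mem_closure_iff] at hcl
    obtain ⟨y, ⟨k, rfl⟩, hy⟩ := hcl r hr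
    refine ⟨k, ?_⟩
    rw [Subtype.dist_eq, Real.dist_eq] at hy
    rw [abs_sub_comm]
    exact hy
  choose d hd1 hd2 using hK
  set U : ℕ → 𝒳 → ℝ := fun m x => ⨆ k, f x (d m k) with hUdef
  have hbdd : ∀ m x, BddAbove (Set.range fun k => f x (d m k)) := by
    intro m x
    refine ⟨g x, fun y ⟨k, hk⟩ => ?_⟩
    rw [← hk]
    exact (abs_le.1 (hb x _ (hd1 m k).1)).2
  have hUb : ∀ m x, |U m x| ≤ g x := by
    intro m x
    rw [abs_le]
    constructor
    · refine le_trans ?_ (le_ciSup (hbdd m x) 0)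
      exact (abs_le.1 (hb x _ (hd1 m 0).1)).1
    · exact ciSup_le fun k => (abs_le.1 (hb x _ (hd1 m k).1)).2
  have hUmeas : ∀ m, Measurable (U m) := by
    intro m
    exact Measurable.iSup fun k => hf_meas.comp (measurable_id.prodMk measurable_const)
  -- key pointwise bound
  have key : ∀ x, ContinuousOn (f x) Γ → ∀ m : ℕ, ∀ θ ∈ Γ ∩ Metric.closedBall θ0 (1/((m:ℝ)+1)),
      f x θ ≤ U m x := by
    intro x hx m θ hθ
    refine le_of_forall_pos_le_add fun η hη => ?_
    have hcw : ContinuousWithinAt (f x) Γ θ := hx θ hθ.1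
    rw [Metric.continuousWithinAt_iff] at hcw
    obtain ⟨r, hr, hball⟩ := hcw η hη
    obtain ⟨k, hk⟩ := hd2 m θ hθ r hr
    have h1 : dist (f x (d m k)) (f x θ) < η :=
      hball (hd1 m k).1 (by rw [Real.dist_eq]; exact hk)
    have h2 : f x (d m k) ≤ U m x := le_ciSup (hbdd m x) k
    rw [Real.dist_eq, abs_sub_lt_iff] at h1
    linarith [h1.2]
  -- convergence to f x θ0
  have hten : ∀ x, ContinuousOn (f x) Γ →
      Tendsto (fun m => U m x) atTop (𝓝 (f x θ0)) := by
    intro x hx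
    rw [Metric.tendsto_atTop]
    intro η hη
    have hcw : ContinuousWithinAt (f x) Γ θ0 := hx θ0 hθ0
    rw [Metric.continuousWithinAt_iff] at hcw
    obtain ⟨r, hr, hball⟩ := hcw (η/2) (by linarith)
    obtain ⟨M, hM⟩ : ∃ M : ℕ, 1/((M:ℝ)+1) < r := exists_nat_one_div_lt hr
    refine ⟨M, fun m hm => ?_⟩
    have hub : U m x ≤ f x θ0 + η/2 := by
      refine ciSup_le fun k => ?_
      have hmem := hd1 m k
      have hdist : dist (d m k) θ0 < r := by
        refine lt_of_le_of_lt (Metric.mem_closedBall.1 hmem.2) (lt_of_le_of_lt ?_ hM)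
        apply one_div_le_one_div_of_le (by positivity)
        exact_mod_cast by exact_mod_cast Nat.add_le_add_right hm 1
      have := hball hmem.1 hdist
      rw [Real.dist_eq, abs_sub_lt_iff] at this
      linarith [this.1]
    have hlb : f x θ0 ≤ U m x :=
      key x hx m θ0 ⟨hθ0, Metric.mem_closedBall_self (by positivity)⟩
    rw [Real.dist_eq, abs_sub_lt_iff]
    constructor <;> linarith
  -- dominated convergence
  have hDCT : Tendsto (fun m => ∫ x, U m x ∂ν) atTop (𝓝 (∫ x, f x θ0 ∂ν)) := by
    refine tendsto_integral_of_dominated_convergence g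
      (fun m => (hUmeas m).aestronglyMeasurable) hgi
      (fun m => Eventually.of_forall fun x => by
        simpa [Real.norm_eq_abs] using hUb m x)
      (hc.mono fun x hx => hten x hx)
  have hev : ∀ᶠ m in atTop, ∫ x, U m x ∂ν < ∫ x, f x θ0 ∂ν + ε :=
    hDCT.eventually (gt_mem_nhds (lt_add_of_pos_right _ hε))
  obtain ⟨m, hm⟩ := hev.exists
  refine ⟨1/(m+1), by positivity, U m, hUmeas m, hUb m, ?_, hm.le⟩
  refine hc.mono fun x hx θ hθ => ?_
  exact key x hx m θ ⟨hθ.1, Metric.ball_subset_closedBall hθ.2⟩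


lemma suLLN_slln {Ω 𝒳 : Type*} [MeasurableSpace Ω] [MeasurableSpace 𝒳]
    (P : Measure Ω) [IsProbabilityMeasure P]
    (ν : Measure 𝒳)
    (X : ℕ → Ω → 𝒳) (hX_meas : ∀ i, Measurable (X i))
    (hX_indep : ProbabilityTheory.iIndepFun X P)
    (hX_law : ∀ i, Measure.map (X i) P = ν)
    {h : 𝒳 → ℝ} (hh : Measurable h) (hhi : Integrable h ν) :
    ∀ᵐ ω ∂P, Tendsto (fun n : ℕ => (1/(n:ℝ)) * ∑ i ∈ Finset.range n, h (X i ω))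
      atTop (𝓝 (∫ x, h x ∂ν)) := by
  have hident : ∀ i, IdentDistrib (fun ω => h (X i ω)) (fun ω => h (X 0 ω)) P P := by
    intro i
    have : IdentDistrib (X i) (X 0) P P :=
      ⟨(hX_meas i).aemeasurable, (hX_meas 0).aemeasurable, by rw [hX_law, hX_law]⟩
    exact this.comp hh
  have hindep : Pairwise (Function.onFun (IndepFun · · P) fun i ω => h (X i ω)) :=
    fun i j hij => (hX_indep.indepFun hij).comp hh hh
  have hint : Integrable (fun ω => h (X 0 ω)) P := by
    have : Integrable h (Measure.map (X 0) P) := by rw [hX_law 0]; exact hhi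
    exact (integrable_map_measure hh.aestronglyMeasurable (hX_meas 0).aemeasurable).1 this
  have hE : (∫ ω, h (X 0 ω) ∂P) = ∫ x, h x ∂ν := by
    rw [← hX_law 0, integral_map (hX_meas 0).aemeasurable hh.aestronglyMeasurable]
  have := strong_law_ae_real (fun i ω => h (X i ω)) hint hindep hident
  filter_upwards [this] with ω hω
  rw [hE] at hω
  convert hω using 2 with n
  rw [one_div, inv_mul_eq_div]

lemma suLLN_one_sided {Ω 𝒳 : Type*} [MeasurableSpace Ω] [MeasurableSpace 𝒳]
    (P : Measure Ω) [IsProbabilityMeasure P]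
    (ν : Measure 𝒳) [IsProbabilityMeasure ν]
    {Γ : Set ℝ} (hΓ : IsCompact Γ)
    (X : ℕ → Ω → 𝒳) (hX_meas : ∀ i, Measurable (X i))
    (hX_indep : ProbabilityTheory.iIndepFun X P)
    (hX_law : ∀ i, Measure.map (X i) P = ν)
    {f : 𝒳 → ℝ → ℝ} {g : 𝒳 → ℝ}
    (hf_meas : Measurable (Function.uncurry f))
    (hg : Measurable g) (hgi : Integrable g ν)
    (hb : ∀ x, ∀ θ ∈ Γ, |f x θ| ≤ g x)
    (hc : ∀ᵐ x ∂ν, ContinuousOn (f x) Γ)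
    {ε : ℝ} (hε : 0 < ε) :
    ∀ᵐ ω ∂P, ∀ᶠ n : ℕ in atTop, ∀ θ ∈ Γ,
      (1/(n:ℝ)) * ∑ i ∈ Finset.range n, f (X i ω) θ - ∫ x, f x θ ∂ν < ε := by
  -- hypotheses for -f
  have hf_meas' : Measurable (Function.uncurry fun x θ => -(f x θ)) := hf_meas.neg
  have hb' : ∀ x, ∀ θ ∈ Γ, |(fun x θ => -(f x θ)) x θ| ≤ g x := by
    intro x θ hθ; simpa [abs_neg] using hb x θ hθ
  have hc' : ∀ᵐ x ∂ν, ContinuousOn ((fun x θ => -(f x θ)) x) Γ :=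
    hc.mono fun x hx => hx.neg
  -- integrability of sections
  have hsec : ∀ θ : ℝ, Measurable (fun x => f x θ) := fun θ =>
    hf_meas.comp (measurable_id.prodMk measurable_const)
  have hint : ∀ θ ∈ Γ, Integrable (fun x => f x θ) ν := fun θ hθ =>
    hgi.mono' (hsec θ).aestronglyMeasurable
      (Eventually.of_forall fun x => by simpa [Real.norm_eq_abs] using hb x θ hθ)
  -- envelopes at every point of Γ
  have H : ∀ θ0 : Γ, ∃ δ > 0, ∃ U L : 𝒳 → ℝ, Measurable U ∧ Measurable L ∧
      (∀ x, |U x| ≤ g x) ∧ (∀ x, |L x| ≤ g x) ∧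
      (∀ᵐ x ∂ν, ∀ θ ∈ Γ ∩ Metric.ball (θ0:ℝ) δ, L x ≤ f x θ ∧ f x θ ≤ U x) ∧
      (∫ x, U x ∂ν ≤ ∫ x, f x (θ0:ℝ) ∂ν + ε/4) ∧
      (∫ x, f x (θ0:ℝ) ∂ν - ε/4 ≤ ∫ x, L x ∂ν) := by
    intro θ0
    obtain ⟨δ1, hδ1, U, hUm, hUb, hUae, hUint⟩ :=
      suLLN_envelope ν hf_meas hg hgi hb hc θ0.2 (by linarith : (0:ℝ) < ε/4)
    obtain ⟨δ2, hδ2, V, hVm, hVb, hVae, hVint⟩ :=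
      suLLN_envelope ν hf_meas' hg hgi hb' hc' θ0.2 (by linarith : (0:ℝ) < ε/4)
    refine ⟨min δ1 δ2, lt_min hδ1 hδ2, U, fun x => -(V x), hUm, hVm.neg, hUb,
      (fun x => by simpa [abs_neg] using hVb x), ?_, hUint, ?_⟩
    · filter_upwards [hUae, hVae] with x h1 h2 θ hθ
      have hθ1 : θ ∈ Γ ∩ Metric.ball (θ0:ℝ) δ1 :=
        ⟨hθ.1, Metric.ball_subset_ball (min_le_left _ _) hθ.2⟩
      have hθ2 : θ ∈ Γ ∩ Metric.ball (θ0:ℝ) δ2 :=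
        ⟨hθ.1, Metric.ball_subset_ball (min_le_right _ _) hθ.2⟩
      exact ⟨by linarith [h2 θ hθ2], h1 θ hθ1⟩
    · have h1 : ∫ x, V x ∂ν ≤ ∫ x, -(f x (θ0:ℝ)) ∂ν + ε/4 := hVint
      rw [integral_neg] at h1
      rw [integral_neg]
      linarith
  choose δ hδ U L hUm hLm hUb hLb hae hUint hLint using H
  -- finite subcover
  have hcov : Γ ⊆ ⋃ θ0 : Γ, Metric.ball (θ0:ℝ) (δ θ0) := fun θ hθ =>
    Set.mem_iUnion.2 ⟨⟨θ, hθ⟩, Metric.mem_ball_self (hδ _)⟩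
  obtain ⟨t, ht⟩ := hΓ.elim_finite_subcover _ (fun θ0 : Γ => Metric.isOpen_ball) hcov
  -- integrability of envelopes
  have hUint' : ∀ j : Γ, Integrable (U j) ν := fun j =>
    hgi.mono' (hUm j).aestronglyMeasurable
      (Eventually.of_forall fun x => by simpa [Real.norm_eq_abs] using hUb j x)
  have hLint' : ∀ j : Γ, Integrable (L j) ν := fun j =>
    hgi.mono' (hLm j).aestronglyMeasurable
      (Eventually.of_forall fun x => by simpa [Real.norm_eq_abs] using hLb j x)
  -- SLLN for the envelopes, j ∈ t
  have hslU : ∀ᵐ ω ∂P, ∀ j ∈ (↑t : Set ↥Γ), Tendsto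
      (fun n : ℕ => (1/(n:ℝ)) * ∑ i ∈ Finset.range n, U j (X i ω)) atTop
      (𝓝 (∫ x, U j x ∂ν)) :=
    (ae_ball_iff t.countable_toSet).2 fun j _ =>
      suLLN_slln P ν X hX_meas hX_indep hX_law (hUm j) (hUint' j)
  have hslL : ∀ᵐ ω ∂P, ∀ j ∈ (↑t : Set ↥Γ), Tendsto
      (fun n : ℕ => (1/(n:ℝ)) * ∑ i ∈ Finset.range n, L j (X i ω)) atTop
      (𝓝 (∫ x, L j x ∂ν)) :=
    (ae_ball_iff t.countable_toSet).2 fun j _ =>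
      suLLN_slln P ν X hX_meas hX_indep hX_law (hLm j) (hLint' j)
  -- a.e. sandwich along the sequence
  have hsand : ∀ᵐ ω ∂P, ∀ i : ℕ, ∀ j ∈ (↑t : Set ↥Γ),
      ∀ θ ∈ Γ ∩ Metric.ball (j:ℝ) (δ j),
        L j (X i ω) ≤ f (X i ω) θ ∧ f (X i ω) θ ≤ U j (X i ω) := by
    rw [ae_all_iff]
    intro i
    refine (ae_ball_iff t.countable_toSet).2 fun j _ => ?_
    have h1 : ∀ᵐ x ∂(Measure.map (X i) P), ∀ θ ∈ Γ ∩ Metric.ball (j:ℝ) (δ j),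
        L j x ≤ f x θ ∧ f x θ ≤ U j x := by rw [hX_law i]; exact hae j
    exact ae_of_ae_map (hX_meas i).aemeasurable h1
  filter_upwards [hslU, hslL, hsand] with ω hTU hTL hS
  -- eventual closeness for the finitely many envelopes
  have hev : ∀ᶠ n : ℕ in atTop, ∀ j ∈ t,
      (1/(n:ℝ)) * ∑ i ∈ Finset.range n, U j (X i ω) < ∫ x, U j x ∂ν + ε/4 ∧
      ∫ x, L j x ∂ν - ε/4 < (1/(n:ℝ)) * ∑ i ∈ Finset.range n, L j (X i ω) := by
    rw [eventually_all_finset]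
    intro j hj
    have h1 := (hTU j (Finset.mem_coe.2 hj)).eventually_lt_const (lt_add_of_pos_right _ (by linarith : (0:ℝ) < ε/4))
    have h2 := (hTL j (Finset.mem_coe.2 hj)).eventually_const_lt (by linarith : ∫ x, L j x ∂ν - ε/4 < ∫ x, L j x ∂ν)
    exact h1.and h2
  filter_upwards [hev] with n hn θ hθ
  obtain ⟨j, hjt, hjball⟩ : ∃ j ∈ t, θ ∈ Metric.ball (j:ℝ) (δ j) := by
    have := ht hθ
    simpa using this
  have hθj : θ ∈ Γ ∩ Metric.ball (j:ℝ) (δ j) := ⟨hθ, hjball⟩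
  -- average bound
  have havg : (1/(n:ℝ)) * ∑ i ∈ Finset.range n, f (X i ω) θ ≤
      (1/(n:ℝ)) * ∑ i ∈ Finset.range n, U j (X i ω) := by
    apply mul_le_mul_of_nonneg_left _ (by positivity)
    exact Finset.sum_le_sum fun i _ => (hS i j (Finset.mem_coe.2 hjt) θ hθj).2
  have hFθ : ∫ x, L j x ∂ν ≤ ∫ x, f x θ ∂ν := by
    refine integral_mono_ae (hLint' j) (hint θ hθ) ?_
    exact (hae j).mono fun x hx => (hx θ hθj).1
  have h1 := (hn j hjt).1
  linarith [hUint j, hLint j]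

lemma suLLN_two_sided {Ω 𝒳 : Type*} [MeasurableSpace Ω] [MeasurableSpace 𝒳]
    (P : Measure Ω) [IsProbabilityMeasure P]
    (ν : Measure 𝒳) [IsProbabilityMeasure ν]
    {Γ : Set ℝ} (hΓ : IsCompact Γ)
    (X : ℕ → Ω → 𝒳) (hX_meas : ∀ i, Measurable (X i))
    (hX_indep : ProbabilityTheory.iIndepFun X P)
    (hX_law : ∀ i, Measure.map (X i) P = ν)
    {f : 𝒳 → ℝ → ℝ} {g : 𝒳 → ℝ}
    (hf_meas : Measurable (Function.uncurry f))
    (hg : Measurable g) (hgi : Integrable g ν)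
    (hb : ∀ x, ∀ θ ∈ Γ, |f x θ| ≤ g x)
    (hc : ∀ᵐ x ∂ν, ContinuousOn (f x) Γ)
    {ε : ℝ} (hε : 0 < ε) :
    ∀ᵐ ω ∂P, ∀ᶠ n : ℕ in atTop, ∀ θ ∈ Γ,
      |(1/(n:ℝ)) * ∑ i ∈ Finset.range n, f (X i ω) θ - ∫ x, f x θ ∂ν| < ε := by
  have h1 := suLLN_one_sided P ν hΓ X hX_meas hX_indep hX_law hf_meas hg hgi hb hc hε
  have hf_meas' : Measurable (Function.uncurry fun x θ => -(f x θ)) := hf_meas.neg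
  have hb' : ∀ x, ∀ θ ∈ Γ, |-(f x θ)| ≤ g x := by
    intro x θ hθ; simpa [abs_neg] using hb x θ hθ
  have hc' : ∀ᵐ x ∂ν, ContinuousOn (fun θ => -(f x θ)) Γ := hc.mono fun x hx => hx.neg
  have h2 := suLLN_one_sided P ν hΓ X hX_meas hX_indep hX_law
    (f := fun x θ => -(f x θ)) hf_meas' hg hgi hb' hc' hε
  filter_upwards [h1, h2] with ω hω1 hω2
  filter_upwards [hω1, hω2] with n hn1 hn2 θ hθ
  have ha := hn1 θ hθ
  have hb2 := hn2 θ hθ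
  simp only [Finset.sum_neg_distrib, integral_neg, mul_neg] at hb2
  rw [abs_sub_lt_iff]
  exact ⟨ha, by linarith⟩

/-- Strong uniform law of large numbers: for a compact set `Γ ⊆ ℝ`, an i.i.d. sequence
`(X_i)` with common law `ν`, and a jointly measurable `f : 𝒳 × Γ → ℝ` which is
ν-a.e. continuous in `θ` on `Γ` and dominated by an integrable function `g`,
almost surely `sup_{θ ∈ Γ} |(1/n) Σ_{i<n} f(X_i, θ) − ∫ f(x,θ) dν(x)| → 0`. -/
theorem strong_uniform_law_of_large_numbers
    {Ω 𝒳 : Type*} [MeasurableSpace Ω] [MeasurableSpace 𝒳]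
    (P : Measure Ω) [IsProbabilityMeasure P]
    (ν : Measure 𝒳) [IsProbabilityMeasure ν]
    (Γ : Set ℝ) (hΓ : IsCompact Γ)
    (X : ℕ → Ω → 𝒳) (hX_meas : ∀ i, Measurable (X i))
    (hX_indep : ProbabilityTheory.iIndepFun X P)
    (hX_law : ∀ i, Measure.map (X i) P = ν)
    (f : 𝒳 → ℝ → ℝ)
    (hf_meas : Measurable (Function.uncurry f))
    -- (a) for ν-almost every x, θ ↦ f(x,θ) is continuous on Γ
    (hf_cont : ∀ᵐ x ∂ν, ContinuousOn (f x) Γ)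
    -- (b) domination by an integrable function g
    (hf_dom : ∃ g : 𝒳 → ℝ, Measurable g ∧ Integrable g ν ∧
      ∀ᵐ x ∂ν, ∀ θ ∈ Γ, |f x θ| ≤ g x) :
    ∀ᵐ ω ∂P,
      TendstoUniformlyOn
        (fun (n : ℕ) (θ : ℝ) => (1 / (n : ℝ)) * ∑ i ∈ Finset.range n, f (X i ω) θ)
        (fun θ => ∫ x, f x θ ∂ν) atTop Γ := by
  obtain ⟨g, hg, hgi, hgb⟩ := hf_dom
  -- truncated version of f, dominated everywhere
  set G : 𝒳 → ℝ := fun x => |g x| with hGdef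
  set f' : 𝒳 → ℝ → ℝ := fun x θ => max (-(G x)) (min (f x θ) (G x)) with hf'def
  have hGm : Measurable G := hg.abs
  have hGi : Integrable G ν := hgi.abs
  have hf'_meas : Measurable (Function.uncurry f') := by
    exact Measurable.max ((hGm.comp measurable_fst).neg)
      (Measurable.min hf_meas (hGm.comp measurable_fst))
  have hf'b : ∀ x, ∀ θ ∈ Γ, |f' x θ| ≤ G x := by
    intro x θ _
    rw [abs_le]
    constructor
    · exact neg_le_neg_iff.2 (le_refl _) |>.trans (le_max_left _ _)
    · exact max_le (neg_le_self (abs_nonneg _)) (min_le_right _ _)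
  have hf'c : ∀ᵐ x ∂ν, ContinuousOn (f' x) Γ :=
    hf_cont.mono fun x hx => by
      have h1 : ContinuousOn (fun θ => min (f x θ) (G x)) Γ :=
        continuous_min.comp_continuousOn (hx.prodMk continuousOn_const)
      exact continuous_max.comp_continuousOn (continuousOn_const.prodMk h1)
  -- a.e. agreement on Γ
  have hagree : ∀ᵐ x ∂ν, ∀ θ ∈ Γ, f' x θ = f x θ := by
    filter_upwards [hgb] with x hx θ hθ
    have h1 : f x θ ≤ G x := le_trans (le_abs_self _) ((hx θ hθ).trans (le_abs_self _))
    have h2 : -(G x) ≤ f x θ := by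
      have := (abs_le.1 ((hx θ hθ).trans (le_abs_self _))).1
      linarith
    rw [hf'def]
    simp only [min_eq_left h1, max_eq_right h2]
  have hFeq : ∀ θ ∈ Γ, ∫ x, f' x θ ∂ν = ∫ x, f x θ ∂ν := fun θ hθ =>
    integral_congr_ae (hagree.mono fun x hx => hx θ hθ)
  -- two-sided bounds for f' at scales 1/(k+1)
  have h2s : ∀ᵐ ω ∂P, ∀ k : ℕ, ∀ᶠ n : ℕ in atTop, ∀ θ ∈ Γ,
      |(1/(n:ℝ)) * ∑ i ∈ Finset.range n, f' (X i ω) θ - ∫ x, f' x θ ∂ν| < 1/((k:ℝ)+1) := by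
    rw [ae_all_iff]
    intro k
    exact suLLN_two_sided P ν hΓ X hX_meas hX_indep hX_law hf'_meas hGm hGi hf'b hf'c
      (by positivity)
  -- a.e. agreement along the sequence
  have hagX : ∀ᵐ ω ∂P, ∀ i : ℕ, ∀ θ ∈ Γ, f' (X i ω) θ = f (X i ω) θ := by
    rw [ae_all_iff]
    intro i
    have h1 : ∀ᵐ x ∂(Measure.map (X i) P), ∀ θ ∈ Γ, f' x θ = f x θ := by
      rw [hX_law i]; exact hagree
    exact ae_of_ae_map (hX_meas i).aemeasurable h1
  filter_upwards [h2s, hagX] with ω hω hag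
  rw [Metric.tendstoUniformlyOn_iff]
  intro ε hε
  obtain ⟨k, hk⟩ : ∃ k : ℕ, 1/((k:ℝ)+1) < ε := exists_nat_one_div_lt hε
  filter_upwards [hω k] with n hn θ hθ
  have hsum : ∑ i ∈ Finset.range n, f' (X i ω) θ = ∑ i ∈ Finset.range n, f (X i ω) θ :=
    Finset.sum_congr rfl fun i _ => hag i θ hθ
  have := hn θ hθ
  rw [hsum, hFeq θ hθ] at this
  rw [Real.dist_eq, abs_sub_comm]
  exact this.trans hk
end

section
/- Strong consistency of the preliminary phase estimator from heterodyne measurement: under the heterodyne model with the additional assumption γ_t ∈ (−π/2, π/2), the estimator γ̂_n = arctan(B̄_n / Ā_n) converges to γ_t almost surely as n → ∞. -/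
open MeasureTheory Filter Topology ProbabilityTheory

lemma gauss0_int (v : NNReal) : Integrable id (gaussianReal 0 v) := by
  by_cases hv : v = 0
  · subst hv; rw [gaussianReal_zero_var]
    refine ⟨measurable_id.aestronglyMeasurable, ?_⟩
    simp [HasFiniteIntegral, lintegral_dirac]
  · rw [gaussianReal_of_var_ne_zero 0 hv,
      integrable_withDensity_iff (measurable_gaussianPDF 0 v)
        (ae_of_all _ fun x => ENNReal.ofReal_lt_top)]
    have hv' : (0:ℝ) < (v:ℝ) := by exact_mod_cast pos_iff_ne_zero.mpr hv
    have hb : (0:ℝ) < (2 * (v:ℝ))⁻¹ := by positivity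
    have key : Integrable
        (fun x : ℝ => (Real.sqrt (2 * Real.pi * v))⁻¹ *
          (x * Real.exp (-(2 * (v:ℝ))⁻¹ * x ^ 2))) volume :=
      (integrable_mul_exp_neg_mul_sq hb).const_mul _
    refine key.congr (ae_of_all _ fun x => ?_)
    simp only [gaussianPDF]
    rw [ENNReal.toReal_ofReal (gaussianPDFReal_nonneg _ _ _), gaussianPDFReal]
    simp only [id_eq, sub_zero]
    rw [show -(2 * (v:ℝ))⁻¹ * x ^ 2 = -x ^ 2 / (2 * v) by field_simp]
    ring

lemma gauss0_mean (v : NNReal) : ∫ x, x ∂gaussianReal 0 v = 0 := by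
  have hmap : (gaussianReal 0 v).map (fun x => (-1 : ℝ) * x) = gaussianReal 0 v := by
    rw [gaussianReal_map_const_mul (-1)]
    norm_num
  have h := integral_map (μ := gaussianReal 0 v)
    (φ := fun x => (-1 : ℝ) * x) (f := fun x => x)
    (by fun_prop) (by rw [hmap]; exact aestronglyMeasurable_id)
  rw [hmap] at h
  simp only [neg_one_mul] at h
  have h2 : ∫ x : ℝ, -x ∂gaussianReal 0 v = -∫ x : ℝ, x ∂gaussianReal 0 v := by
    simpa using integral_neg (μ := gaussianReal 0 v) (f := fun x : ℝ => x)
  linarith [h, h2]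

lemma gauss_int (m : ℝ) (v : NNReal) : Integrable id (gaussianReal m v) := by
  have hmap : (gaussianReal 0 v).map (· + m) = gaussianReal m v := by
    simpa using gaussianReal_map_add_const (μ := 0) (v := v) m
  rw [← hmap, integrable_map_measure aestronglyMeasurable_id
    (by fun_prop : Measurable fun x : ℝ => x + m).aemeasurable]
  have := (gauss0_int v).add (integrable_const (μ := gaussianReal 0 v) m)
  exact this.congr (ae_of_all _ fun x => rfl)

lemma gauss_mean (m : ℝ) (v : NNReal) : ∫ x, x ∂gaussianReal m v = m := by
  have hmap : (gaussianReal 0 v).map (· + m) = gaussianReal m v := by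
    simpa using gaussianReal_map_add_const (μ := 0) (v := v) m
  rw [← hmap, integral_map (by fun_prop : Measurable fun x : ℝ => x + m).aemeasurable
    (by rw [hmap]; exact aestronglyMeasurable_id)]
  have h0 : Integrable (fun x : ℝ => x) (gaussianReal 0 v) := gauss0_int v
  rw [integral_add h0 (integrable_const m), gauss0_mean]
  simp

/-- Strong consistency of the preliminary phase estimator from heterodyne measurement:
with i.i.d. Gaussian heterodyne outcomes
`A_i ~ N(√(θ_t n̄_S)·cos γ_t, n̄_B + 1/2)` and `B_i ~ N(√(θ_t n̄_S)·sin γ_t, n̄_B + 1/2)`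
(all independent), `f(n) → ∞`, normalized sample means
`Ā_n = (1/(f(n)·√n̄_S)) Σ_{i<f(n)} A_i`, `B̄_n = (1/(f(n)·√n̄_S)) Σ_{i<f(n)} B_i`, and
`γ_t ∈ (−π/2, π/2)`, the estimator `γ̂_n = arctan(B̄_n / Ā_n)` converges to `γ_t`
almost surely. -/
theorem heterodyne_phase_strong_consistency
    {Ω : Type*} [MeasurableSpace Ω] (P : Measure Ω) [IsProbabilityMeasure P]
    (θt : ℝ) (hθt : θt ∈ Set.Ioc (0 : ℝ) 1)
    (γt : ℝ) (hγt : γt ∈ Set.Ioo (-(Real.pi / 2)) (Real.pi / 2))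
    (nS : ℝ) (hnS : 0 < nS) (nB : NNReal)
    (A B : ℕ → Ω → ℝ)
    (hA_meas : ∀ i, Measurable (A i)) (hB_meas : ∀ i, Measurable (B i))
    (hindep : iIndepFun (Sum.elim A B) P)
    (hA_law : ∀ i, Measure.map (A i) P =
      gaussianReal (Real.sqrt (θt * nS) * Real.cos γt) (nB + 1 / 2))
    (hB_law : ∀ i, Measure.map (B i) P =
      gaussianReal (Real.sqrt (θt * nS) * Real.sin γt) (nB + 1 / 2))
    (f : ℕ → ℕ) (hf : Tendsto f atTop atTop) :
    ∀ᵐ ω ∂P,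
      Tendsto (fun n : ℕ =>
          Real.arctan (((∑ i ∈ Finset.range (f n), B i ω) / ((f n : ℝ) * Real.sqrt nS)) /
            ((∑ i ∈ Finset.range (f n), A i ω) / ((f n : ℝ) * Real.sqrt nS))))
        atTop (𝓝 γt) := by
  set μA := Real.sqrt (θt * nS) * Real.cos γt with hμA
  set μB := Real.sqrt (θt * nS) * Real.sin γt with hμB
  -- integrability and identical distribution
  have hA_int : Integrable (A 0) P := by
    rw [← Function.id_comp (A 0),
      ← integrable_map_measure (by rw [hA_law 0]; exact aestronglyMeasurable_id)
        (hA_meas 0).aemeasurable, hA_law 0]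
    exact gauss_int _ _
  have hB_int : Integrable (B 0) P := by
    rw [← Function.id_comp (B 0),
      ← integrable_map_measure (by rw [hB_law 0]; exact aestronglyMeasurable_id)
        (hB_meas 0).aemeasurable, hB_law 0]
    exact gauss_int _ _
  have hA_mean : ∫ ω, A 0 ω ∂P = μA := by
    have := integral_map (hA_meas 0).aemeasurable
      (f := fun x : ℝ => x) (by rw [hA_law 0]; exact aestronglyMeasurable_id)
    rw [hA_law 0, gauss_mean] at this
    exact this.symm
  have hB_mean : ∫ ω, B 0 ω ∂P = μB := by
    have := integral_map (hB_meas 0).aemeasurable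
      (f := fun x : ℝ => x) (by rw [hB_law 0]; exact aestronglyMeasurable_id)
    rw [hB_law 0, gauss_mean] at this
    exact this.symm
  -- strong law of large numbers
  have hA_slln := strong_law_ae_real A hA_int
    (fun i j hij => hindep.indepFun (show (Sum.inl i : ℕ ⊕ ℕ) ≠ Sum.inl j by simpa using hij))
    (fun i => ⟨(hA_meas i).aemeasurable, (hA_meas 0).aemeasurable,
      by rw [hA_law i, hA_law 0]⟩)
  have hB_slln := strong_law_ae_real B hB_int
    (fun i j hij => hindep.indepFun
      (show (Sum.inr i : ℕ ⊕ ℕ) ≠ Sum.inr j by simpa using hij))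
    (fun i => ⟨(hB_meas i).aemeasurable, (hB_meas 0).aemeasurable,
      by rw [hB_law i, hB_law 0]⟩)
  rw [hA_mean] at hA_slln
  rw [hB_mean] at hB_slln
  filter_upwards [hA_slln, hB_slln] with ω hA' hB'
  have hAf : Tendsto (fun n => (∑ i ∈ Finset.range (f n), A i ω) / (f n : ℝ))
      atTop (𝓝 μA) := hA'.comp hf
  have hBf : Tendsto (fun n => (∑ i ∈ Finset.range (f n), B i ω) / (f n : ℝ))
      atTop (𝓝 μB) := hB'.comp hf
  have hs : Real.sqrt nS ≠ 0 := by positivity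
  have hcos : 0 < Real.cos γt := Real.cos_pos_of_mem_Ioo hγt
  have hsq : 0 < Real.sqrt (θt * nS) := Real.sqrt_pos.mpr (mul_pos hθt.1 hnS)
  have hμA_pos : 0 < μA := mul_pos hsq hcos
  have hden : μA / Real.sqrt nS ≠ 0 := by positivity
  have hratio : Tendsto (fun n =>
      ((∑ i ∈ Finset.range (f n), B i ω) / (f n : ℝ) / Real.sqrt nS) /
      ((∑ i ∈ Finset.range (f n), A i ω) / (f n : ℝ) / Real.sqrt nS))
      atTop (𝓝 ((μB / Real.sqrt nS) / (μA / Real.sqrt nS))) :=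
    (hBf.div_const _).div (hAf.div_const _) hden
  have harctan := (Real.continuous_arctan.tendsto _).comp hratio
  have hval : Real.arctan ((μB / Real.sqrt nS) / (μA / Real.sqrt nS)) = γt := by
    have h1 : (μB / Real.sqrt nS) / (μA / Real.sqrt nS) = Real.tan γt := by
      have hdd : ∀ a b : ℝ, (a / Real.sqrt nS) / (b / Real.sqrt nS) = a / b := by
        intro a b
        rw [div_div_div_comm, div_self hs, div_one]
      rw [hdd, hμA, hμB, mul_div_mul_left _ _ hsq.ne', Real.tan_eq_sin_div_cos]
    rw [h1, Real.arctan_tan hγt.1 hγt.2]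
  rw [hval] at harctan
  convert harctan using 2 with n
  simp only [Function.comp_def, div_div]
end

section
/- For all real numbers ω, ζ, and φ, the quantity l₂ = cosh²(ω)·cosh²(ζ)·(1 + tanh²(ω)·tanh²(ζ) + 2·tanh(ω)·tanh(ζ)·cos φ) satisfies l₂ ≥ cosh²(|ω| − |ζ|) ≥ 1. -/
/-!
Since `cosh · tanh = sinh`, the quantity is `a² + b² + 2ab cos φ` with `a = cosh ω cosh ζ` and
`b = sinh ω sinh ζ`, which is at least `(|a| - |b|)²`. As `sinh |x| = |sinh x|`, the subtraction
formula gives `|a| - |b| = cosh |ω| cosh |ζ| - sinh |ω| sinh |ζ| = cosh (|ω| - |ζ|)`.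
-/

open Real

theorem sq_abs_sub_abs_le_sq_add_sq_add_two_mul {a b c : ℝ} (hc : |c| ≤ 1) :
    (|a| - |b|) ^ 2 ≤ a ^ 2 + b ^ 2 + 2 * a * b * c := by
  have hab : -(|a| * |b|) ≤ a * b * c := by
    have : |a * b * c| ≤ |a| * |b| := by
      rw [abs_mul, abs_mul]
      exact mul_le_of_le_one_right (by positivity) hc
    linarith [neg_abs_le (a * b * c)]
  nlinarith [sq_abs a, sq_abs b]

namespace Real

theorem cosh_sq_mul_cosh_sq_mul_tanh (x y c : ℝ) :
    cosh x ^ 2 * cosh y ^ 2 * (1 + tanh x ^ 2 * tanh y ^ 2 + 2 * tanh x * tanh y * c) =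
      (cosh x * cosh y) ^ 2 + (sinh x * sinh y) ^ 2 + 2 * (cosh x * cosh y) * (sinh x * sinh y) * c := by
  have hx := (cosh_pos x).ne'
  have hy := (cosh_pos y).ne'
  rw [tanh_eq_sinh_div_cosh, tanh_eq_sinh_div_cosh]
  field_simp

theorem cosh_abs_sub_abs (x y : ℝ) :
    cosh (|x| - |y|) = |cosh x * cosh y| - |sinh x * sinh y| := by
  rw [cosh_sub, cosh_abs, cosh_abs, ← abs_sinh, ← abs_sinh, abs_mul, abs_mul,
    abs_of_pos (cosh_pos x), abs_of_pos (cosh_pos y)]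

end Real

/-- For all real `ω`, `ζ`, `φ`, the quantity
`l₂ = cosh²(ω)·cosh²(ζ)·(1 + tanh²(ω)·tanh²(ζ) + 2·tanh(ω)·tanh(ζ)·cos φ)`
satisfies `l₂ ≥ cosh²(|ω| − |ζ|) ≥ 1`. -/
theorem l2_lower_bound (ω ζ φ : ℝ) :
    Real.cosh ω ^ 2 * Real.cosh ζ ^ 2 *
        (1 + Real.tanh ω ^ 2 * Real.tanh ζ ^ 2 +
          2 * Real.tanh ω * Real.tanh ζ * Real.cos φ)
      ≥ Real.cosh (|ω| - |ζ|) ^ 2 ∧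
    Real.cosh (|ω| - |ζ|) ^ 2 ≥ 1 := by
  refine ⟨?_, one_le_pow₀ (one_le_cosh _)⟩
  rw [cosh_sq_mul_cosh_sq_mul_tanh, cosh_abs_sub_abs]
  exact sq_abs_sub_abs_le_sq_add_sq_add_two_mul (abs_cos_le_one φ)
end
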